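/- arXiv:1502.06989 — 6 statements merged into one kernel-verified Lean document; each statement's English description precedes it below -/
import Mathlib

section
/- Let k be a commutative ring, G a finite group, and C = FI_G. For every m ∈ ℕ, the coinduction functor Q applied to the free module kC e_m satisfies: Q(kC e_m) is isomorphic, as a C-module, to the direct sum kC e_m ⊕ kC e_{m+1}. -/
/-!
By the adjunction, `Hom(V, Q(kC e_m)) ≅ Hom(S V, kC e_m)` naturally in `V`, so it suffices to
split `Hom(S V, kC e_m)` naturally as `Hom(V, kC e_m) × Hom(V, kC e_{m+1})`.

Write `u : X ⟶ ι X` for `t ↦ t + 1` and, for a point `s` of `X` and `g ∈ G`, `a_{s,g} : X ⟶ ι X`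
for the map agreeing with `u` except that it sends `s` to the new point `0` with label `g⁻¹`.
Two counit-like maps `ε₁ : S(kC e_m) ⟶ kC e_m` (drop the new point `0`, killing the basis vectors
that hit it) and `ε₂ : S(kC e_{m+1}) ⟶ kC e_m` (keep the basis vectors sending `0 ↦ 0` with label
`1`, then drop that point) give `(α, β) ↦ S α ≫ ε₁ + S β ≫ ε₂`. Its inverse sends `φ` to
`ψ₁ φ = V(u) ≫ φ` and to `ψ₂ φ`, whose coefficient at a basis vector `p : m + 1 ⟶ Y` is the
coefficient at `tail p` of `φ(V(a_{p 0, p.2 0}) v) - φ(V(u) v)`. Naturality of `ψ₂ φ` comes from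
the naturality of `u` and of `a`, and from the fact that every morphism of `FI_G` is a
monomorphism; `G` being finite makes the hom-sets finite, so `ψ₂ φ` is a finite sum.
-/

open CategoryTheory CategoryTheory.Limits

attribute [local instance] CategoryTheory.Abelian.hasFiniteBiproducts

/-- Objects of the category `FI_G`: natural numbers (bundled). -/
structure FIG (G : Type) where
  n : ℕ

variable {G : Type}

/-- The category `FI_G`: a morphism `X ⟶ Y` is a pair `(f, c)` where
`f : Fin X.n ↪ Fin Y.n` is an injective map and `c : Fin X.n → G` is arbitrary,
with composition `(f₂,c₂) ∘ (f₁,c₁) = (f₂ ∘ f₁, t ↦ c₂(f₁ t) * c₁ t)`. -/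
instance FIG.category [Group G] : Category (FIG G) where
  Hom X Y := (Fin X.n ↪ Fin Y.n) × (Fin X.n → G)
  id X := ⟨Function.Embedding.refl _, fun _ => 1⟩
  comp f g := ⟨f.1.trans g.1, fun t => g.2 (f.1 t) * f.2 t⟩
  id_comp f := Prod.ext rfl (funext fun t => mul_one _)
  comp_id f := Prod.ext rfl (funext fun t => one_mul _)
  assoc f g h := by
    refine Prod.ext rfl ?_
    funext t
    dsimp
    rw [mul_assoc]
    rfl

/-- The free `FI_G`-module `kC e_n`, sending `m` to the free `k`-module
on the hom-set `FI_G(n, m)`. -/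
noncomputable def FIG.free (k : Type) [CommRing k] (G : Type) [Group G] (n : ℕ) :
    FIG G ⥤ ModuleCat k :=
  coyoneda.obj (Opposite.op ⟨n⟩) ⋙ ModuleCat.free k

/-- An `FI_G`-module is finitely generated if it admits an epimorphism from a
finite direct sum `⨁ᵢ kC e_{nᵢ}` of free modules. -/
noncomputable def FIG.FinGen (k : Type) [CommRing k] [Group G]
    (V : FIG G ⥤ ModuleCat k) : Prop :=
  ∃ (r : ℕ) (a : Fin r → ℕ) (p : (⨁ fun i : Fin r => FIG.free k G (a i)) ⟶ V), Epi p

/-- An `FI_G`-module `V` is finite dimensional if each `V(m)` is a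
finite-dimensional `k`-vector space and `V(m) = 0` for all but finitely many `m`. -/
def FIG.FinDim (k : Type) [Field k] [Group G] (V : FIG G ⥤ ModuleCat k) : Prop :=
  (∀ X : FIG G, Module.Finite k (V.obj X)) ∧
    ∃ N : ℕ, ∀ X : FIG G, N < X.n → IsZero (V.obj X)

/-- An `FI_G`-module `F` is torsion-free if `Hom(T, F) = 0` for every
finite-dimensional `FI_G`-module `T`. -/
def FIG.TorsionFree (k : Type) [Field k] [Group G] (F : FIG G ⥤ ModuleCat k) : Prop :=
  ∀ T : FIG G ⥤ ModuleCat k, FIG.FinDim k T → ∀ f : T ⟶ F, f = 0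

/-- Extension of an injection `f : Fin m ↪ Fin n` to `Fin (m+1) ↪ Fin (n+1)`,
sending `0 ↦ 0` and `t + 1 ↦ f t + 1`. -/
def FIG.extEmb {m n : ℕ} (f : Fin m ↪ Fin n) : Fin (m + 1) ↪ Fin (n + 1) where
  toFun := Fin.cons 0 (fun t => (f t).succ)
  inj' := by
    intro a b h
    induction a using Fin.cases with
    | zero =>
      induction b using Fin.cases with
      | zero => rfl
      | succ j =>
        simp only [Fin.cons_zero, Fin.cons_succ] at h
        exact absurd h.symm (Fin.succ_ne_zero _)
    | succ i =>
      induction b using Fin.cases with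
      | zero =>
        simp only [Fin.cons_zero, Fin.cons_succ] at h
        exact absurd h (Fin.succ_ne_zero _)
      | succ j =>
        simp only [Fin.cons_succ] at h
        exact congrArg Fin.succ (f.injective (Fin.succ_injective _ h))

/-- The functor `ι : FI_G → FI_G`, `ι(n) = 1 ⊙ n`: on objects `n ↦ n + 1`, and on
a morphism `(f, c)` it gives `(f', c')` with `f' 0 = 0`, `c' 0 = 1`,
`f' (t+1) = f t + 1` and `c' (t+1) = c t`. -/
def FIG.iota (G : Type) [Group G] : FIG G ⥤ FIG G where
  obj X := ⟨X.n + 1⟩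
  map f := ⟨FIG.extEmb f.1, Fin.cons 1 f.2⟩
  map_id X := by
    refine Prod.ext (DFunLike.ext _ _ fun t => ?_) (funext fun t => ?_) <;>
      induction t using Fin.cases <;> rfl
  map_comp {X Y Z} f g := by
    refine Prod.ext (DFunLike.ext _ _ fun t => ?_) (funext fun t => ?_) <;>
      induction t using Fin.cases
    · rfl
    · rfl
    · exact (one_mul 1).symm
    · rfl

/-- The shift functor `S : V ↦ V ∘ ι` on `FI_G`-modules. -/
def FIG.S (k : Type) [CommRing k] (G : Type) [Group G] :
    (FIG G ⥤ ModuleCat k) ⥤ (FIG G ⥤ ModuleCat k) :=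
  (Functor.whiskeringLeft (FIG G) (FIG G) (ModuleCat k)).obj (FIG.iota G)

namespace CategoryTheory.Adjunction

variable {C D : Type*} [Category C] [Category D] [Preadditive C] [Preadditive D]
  {S : C ⥤ D} [S.Additive] {Q : D ⥤ C}

theorem nonempty_iso_biprod_of_splitting (adj : S ⊣ Q) {A B : C} [HasBinaryBiproduct A B]
    {F : D} (ε₁ : S.obj A ⟶ F) (ε₂ : S.obj B ⟶ F)
    (ψ₁ : ∀ {V : C}, (S.obj V ⟶ F) → (V ⟶ A)) (ψ₂ : ∀ {V : C}, (S.obj V ⟶ F) → (V ⟶ B))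
    (hψ₁ : ∀ {V W : C} (f : V ⟶ W) (φ : S.obj W ⟶ F), ψ₁ (S.map f ≫ φ) = f ≫ ψ₁ φ)
    (hψ₂ : ∀ {V W : C} (f : V ⟶ W) (φ : S.obj W ⟶ F), ψ₂ (S.map f ≫ φ) = f ≫ ψ₂ φ)
    (h₁₁ : ψ₁ ε₁ = 𝟙 A) (h₁₂ : ψ₂ ε₁ = 0) (h₂₁ : ψ₁ ε₂ = 0) (h₂₂ : ψ₂ ε₂ = 𝟙 B)
    (hsum : ∀ {V : C} (φ : S.obj V ⟶ F), S.map (ψ₁ φ) ≫ ε₁ + S.map (ψ₂ φ) ≫ ε₂ = φ) :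
    Nonempty (Q.obj F ≅ A ⊞ B) := by
  have counit_comp {V : C} (f : S.obj V ⟶ F) :
      S.map (adj.homEquiv _ _ f) ≫ adj.counit.app F = f :=
    (adj.homEquiv_counit _ _ _).symm.trans ((adj.homEquiv _ _).symm_apply_apply f)
  let b : BinaryBicone A B :=
    { pt := Q.obj F
      fst := ψ₁ (adj.counit.app F)
      snd := ψ₂ (adj.counit.app F)
      inl := adj.homEquiv _ _ ε₁
      inr := adj.homEquiv _ _ ε₂
      inl_fst := by rw [← hψ₁, counit_comp, h₁₁]
      inl_snd := by rw [← hψ₂, counit_comp, h₁₂]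
      inr_fst := by rw [← hψ₁, counit_comp, h₂₁]
      inr_snd := by rw [← hψ₂, counit_comp, h₂₂] }
  refine ⟨biprod.uniqueUpToIso A B (isBinaryBilimitOfTotal b ?_)⟩
  apply (adj.homEquiv _ _).symm.injective
  simp only [homEquiv_counit, S.map_add, S.map_comp, Preadditive.add_comp, Category.assoc,
    counit_comp, S.map_id, Category.id_comp, b]
  exact hsum _

end CategoryTheory.Adjunction

namespace ModuleCat

variable (k : Type) [CommRing k]

noncomputable def freeMapOfPartial {α β : Type} (P : α → Prop) (g : ∀ a, P a → β) :
    (free k).obj α ⟶ (free k).obj β :=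
  freeDesc <| TypeCat.ofHom fun a =>
    haveI := Classical.dec (P a)
    if h : P a then freeMk (g a h) else 0

variable {k} {α β : Type} {P : α → Prop} {g : ∀ a, P a → β} {a : α}

theorem freeMapOfPartial_freeMk_of_pos (h : P a) :
    freeMapOfPartial k P g (freeMk a) = freeMk (g a h) := by
  simp [freeMapOfPartial, h]

theorem freeMapOfPartial_freeMk_of_neg (h : ¬P a) : freeMapOfPartial k P g (freeMk a) = 0 := by
  simp [freeMapOfPartial, h]

theorem free_hom_apply_eq_sum [Fintype α] {M : ModuleCat k} (f : (free k).obj α ⟶ M)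
    (x : α →₀ k) : f x = ∑ a, x a • f (freeMk a) := by
  let fₗ : (α →₀ k) →ₗ[k] M := f.hom
  change fₗ x = ∑ a, x a • fₗ (Finsupp.single a 1)
  conv_lhs => rw [← Finsupp.univ_sum_single x]
  simp only [map_sum, ← map_smul, Finsupp.smul_single_one]

variable (k) {C : Type*} [Category C] {A B : C ⥤ Type}

noncomputable def freeNatTransOfPartial (P : ∀ X, A.obj X → Prop) (g : ∀ X a, P X a → B.obj X)
    (hP : ∀ {X Y : C} (β : X ⟶ Y) (a : A.obj X), P Y (A.map β a) ↔ P X a)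
    (hg : ∀ {X Y : C} (β : X ⟶ Y) (a : A.obj X) (h : P X a),
      g Y (A.map β a) ((hP β a).2 h) = B.map β (g X a h)) :
    A ⋙ free k ⟶ B ⋙ free k where
  app X := freeMapOfPartial k (P X) (g X)
  naturality X Y β := by
    refine free_hom_ext fun a => ?_
    change freeMapOfPartial k (P Y) (g Y) ((free k).map (A.map β) (freeMk a)) =
      (free k).map (B.map β) (freeMapOfPartial k (P X) (g X) (freeMk a))
    rw [free_map_apply]
    by_cases h : P X a
    · rw [freeMapOfPartial_freeMk_of_pos h, freeMapOfPartial_freeMk_of_pos ((hP β a).2 h),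
        hg β a h, free_map_apply]
    · rw [freeMapOfPartial_freeMk_of_neg h, freeMapOfPartial_freeMk_of_neg (mt (hP β a).1 h),
        map_zero]

end ModuleCat

namespace FIG

section Morphisms

variable [Group G] {m : ℕ}

theorem hom_ext {X Y : FIG G} {p q : X ⟶ Y} (h₁ : ∀ t, p.1 t = q.1 t) (h₂ : ∀ t, p.2 t = q.2 t) :
    p = q :=
  Prod.ext (DFunLike.ext _ _ h₁) (funext h₂)

@[simp]
theorem comp_fst {X Y Z : FIG G} (p : X ⟶ Y) (β : Y ⟶ Z) (t : Fin X.n) :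
    (p ≫ β).1 t = β.1 (p.1 t) := rfl

@[simp]
theorem comp_snd {X Y Z : FIG G} (p : X ⟶ Y) (β : Y ⟶ Z) (t : Fin X.n) :
    (p ≫ β).2 t = β.2 (p.1 t) * p.2 t := rfl

instance mono {X Y : FIG G} (β : X ⟶ Y) : Mono β where
  right_cancellation p q h := by
    have h₁ (t) : p.1 t = q.1 t := β.1.injective congr(($h).1 t)
    exact hom_ext h₁ fun t => by simpa [h₁] using congr(($h).2 t)

theorem exists_comp_eq_iff {X Y Z : FIG G} (β : Y ⟶ Z) (q : X ⟶ Z) :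
    (∃ p : X ⟶ Y, p ≫ β = q) ↔ ∀ t, q.1 t ∈ Set.range β.1 := by
  refine ⟨by rintro ⟨p, rfl⟩ t; exact ⟨p.1 t, rfl⟩, fun h => ?_⟩
  choose f hf using h
  have hf_inj : Function.Injective f := fun a b hab => q.1.injective (by rw [← hf a, ← hf b, hab])
  exact ⟨⟨⟨f, hf_inj⟩, fun t => (β.2 (f t))⁻¹ * q.2 t⟩, hom_ext hf (by simp)⟩

instance [Finite G] (X Y : FIG G) : Finite (X ⟶ Y) :=
  inferInstanceAs (Finite ((Fin X.n ↪ Fin Y.n) × (Fin X.n → G)))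

noncomputable instance [Finite G] (X Y : FIG G) : Fintype (X ⟶ Y) := Fintype.ofFinite _

instance (X : FIG G) : NeZero ((iota G).obj X).n := ⟨Nat.succ_ne_zero X.n⟩

/-- The points of `ι X` are written `0` and `(succHom X).1 t` rather than `t.succ`: the latter
lives in `Fin (X.n + 1)`, which is only definitionally equal to `Fin ((iota G).obj X).n`, and
`simp` does not see through that. -/
def succHom (X : FIG G) : X ⟶ (iota G).obj X := ⟨Fin.succEmb X.n, fun _ => 1⟩

@[simp] theorem succHom_snd (X : FIG G) (t : Fin X.n) : (succHom X).2 t = 1 := rfl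

@[simp] theorem succHom_fst_ne_zero (X : FIG G) (t : Fin X.n) : (succHom X).1 t ≠ 0 :=
  Fin.succ_ne_zero t

theorem eq_zero_or_eq_succHom_fst {X : FIG G} (x : Fin ((iota G).obj X).n) :
    x = 0 ∨ ∃ t, x = (succHom X).1 t :=
  Fin.eq_zero_or_eq_succ x

@[simp] theorem iota_map_fst_zero {Y Z : FIG G} (β : Y ⟶ Z) : ((iota G).map β).1 0 = 0 := rfl

@[simp] theorem iota_map_snd_zero {Y Z : FIG G} (β : Y ⟶ Z) : ((iota G).map β).2 0 = 1 := rfl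

@[simp] theorem iota_map_fst_succHom_fst {Y Z : FIG G} (β : Y ⟶ Z) (t : Fin Y.n) :
    ((iota G).map β).1 ((succHom Y).1 t) = (succHom Z).1 (β.1 t) := rfl

@[simp] theorem iota_map_snd_succHom_fst {Y Z : FIG G} (β : Y ⟶ Z) (t : Fin Y.n) :
    ((iota G).map β).2 ((succHom Y).1 t) = β.2 t := rfl

@[simp] theorem iota_map_fst_eq_zero_iff {Y Z : FIG G} (β : Y ⟶ Z) (x : Fin ((iota G).obj Y).n) :
    ((iota G).map β).1 x = 0 ↔ x = 0 := by
  rcases eq_zero_or_eq_succHom_fst x with rfl | ⟨t, rfl⟩ <;> simp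

theorem comp_succHom {Y Z : FIG G} (β : Y ⟶ Z) : β ≫ succHom Z = succHom Y ≫ (iota G).map β :=
  hom_ext (by simp) (by simp)

def swapHom (X : FIG G) (s : Fin X.n) (g : G) : X ⟶ (iota G).obj X :=
  ⟨⟨fun t => if t = s then 0 else (succHom X).1 t, fun a b hab => by
      by_cases ha : a = s <;> by_cases hb : b = s <;> simp_all [eq_comm (a := (0 : Fin _))]⟩,
    fun t => if t = s then g⁻¹ else 1⟩

@[simp]
theorem swapHom_fst (X : FIG G) (s : Fin X.n) (g : G) (t : Fin X.n) :
    (swapHom X s g).1 t = if t = s then 0 else (succHom X).1 t := rfl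

@[simp]
theorem swapHom_snd (X : FIG G) (s : Fin X.n) (g : G) (t : Fin X.n) :
    (swapHom X s g).2 t = if t = s then g⁻¹ else 1 := rfl

theorem comp_swapHom {Y Z : FIG G} (β : Y ⟶ Z) (s : Fin Y.n) (g : G) :
    β ≫ swapHom Z (β.1 s) (β.2 s * g) = swapHom Y s g ≫ (iota G).map β := by
  refine hom_ext (fun t => ?_) (fun t => ?_) <;> by_cases ht : t = s <;> simp [ht]

theorem comp_swapHom_of_notMem_range {Y Z : FIG G} (β : Y ⟶ Z) {s : Fin Z.n}
    (hs : s ∉ Set.range β.1) (g : G) : β ≫ swapHom Z s g = β ≫ succHom Z := by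
  have hne (t : Fin Y.n) : β.1 t ≠ s := fun h => hs ⟨t, h⟩
  exact hom_ext (by simp [hne]) (by simp [hne])

theorem swapHom_zero_one (X : FIG G) :
    swapHom ((iota G).obj X) 0 1 = (iota G).map (succHom X) := by
  refine hom_ext (fun x => ?_) (fun x => ?_) <;>
    rcases eq_zero_or_eq_succHom_fst x with rfl | ⟨t, rfl⟩ <;> simp

theorem comp_swapHom_head_iff {X : FIG G} (v : (⟨m + 1⟩ : FIG G) ⟶ X) (s : Fin X.n)
    (g : G) :
    ((v ≫ swapHom X s g).1 0 = 0 ∧ (v ≫ swapHom X s g).2 0 = 1) ↔ (v.1 0 = s ∧ v.2 0 = g) := by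
  -- `-proj` keeps `(⟨m + 1⟩ : FIG G).n` unreduced, so that `comp_fst` and `comp_snd` still match.
  by_cases h : v.1 0 = s
  · simp -proj [h, inv_mul_eq_one, eq_comm (a := g)]
  · simp -proj [h]

def tail {Y : FIG G} (p : (⟨m + 1⟩ : FIG G) ⟶ Y) : (⟨m⟩ : FIG G) ⟶ Y :=
  ⟨(Fin.succEmb m).trans p.1, fun t => p.2 t.succ⟩

@[simp] theorem tail_fst {Y : FIG G} (p : (⟨m + 1⟩ : FIG G) ⟶ Y) (t : Fin m) :
    (tail p).1 t = p.1 t.succ := rfl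

@[simp] theorem tail_comp {Y Z : FIG G} (p : (⟨m + 1⟩ : FIG G) ⟶ Y) (β : Y ⟶ Z) :
    tail (p ≫ β) = tail p ≫ β := rfl

theorem tail_fst_ne_head {Y : FIG G} (p : (⟨m + 1⟩ : FIG G) ⟶ Y) (t : Fin m) :
    (tail p).1 t ≠ p.1 0 :=
  fun h => Fin.succ_ne_zero t (p.1.injective h)

theorem hom_eq_iff_head_tail {Y : FIG G} {p q : (⟨m + 1⟩ : FIG G) ⟶ Y} :
    p = q ↔ p.1 0 = q.1 0 ∧ p.2 0 = q.2 0 ∧ tail p = tail q := by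
  refine ⟨by rintro rfl; simp, fun ⟨h₁, h₂, h⟩ => hom_ext (fun t => ?_) (fun t => ?_)⟩ <;>
    cases t using Fin.cases
  exacts [h₁, congr(($h).1 _), h₂, congr(($h).2 _)]

def unshift {X : FIG G} (q : (⟨m⟩ : FIG G) ⟶ (iota G).obj X) (hq : ∀ t, q.1 t ≠ 0) :
    (⟨m⟩ : FIG G) ⟶ X :=
  ⟨⟨fun t => (q.1 t).pred (hq t), fun _ _ h => q.1.injective (Fin.pred_inj.1 h)⟩, q.2⟩

theorem unshift_eq_iff {X : FIG G} (q : (⟨m⟩ : FIG G) ⟶ (iota G).obj X)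
    (hq : ∀ t, q.1 t ≠ 0) (r : (⟨m⟩ : FIG G) ⟶ X) : unshift q hq = r ↔ r ≫ succHom X = q := by
  constructor
  · rintro rfl
    exact hom_ext (fun t => Fin.succ_pred _ (hq t)) fun t => one_mul _
  · rintro rfl
    exact hom_ext (fun t => Fin.pred_succ (h := hq t) _) fun t => one_mul _

theorem unshift_comp {X Y : FIG G} (q : (⟨m⟩ : FIG G) ⟶ (iota G).obj X)
    (hq : ∀ t, q.1 t ≠ 0) (β : X ⟶ Y) (hq' : ∀ t, (q ≫ (iota G).map β).1 t ≠ 0) :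
    unshift (q ≫ (iota G).map β) hq' = unshift q hq ≫ β := by
  rw [unshift_eq_iff, Category.assoc, comp_succHom, ← Category.assoc,
    (unshift_eq_iff q hq _).1 rfl]

def zeroCons {X : FIG G} (r : (⟨m⟩ : FIG G) ⟶ (iota G).obj X) (hr : ∀ t, r.1 t ≠ 0) :
    (⟨m + 1⟩ : FIG G) ⟶ (iota G).obj X :=
  ⟨⟨Fin.cons 0 r.1, Fin.cons_injective_iff.2 ⟨fun ⟨t, ht⟩ => hr t ht, r.1.injective⟩⟩,
    Fin.cons 1 r.2⟩

@[simp] theorem tail_zeroCons {X : FIG G} (r : (⟨m⟩ : FIG G) ⟶ (iota G).obj X)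
    (hr : ∀ t, r.1 t ≠ 0) : tail (zeroCons r hr) = r := rfl

theorem comp_iota_map_head_iff {X Y : FIG G} (q : (⟨m + 1⟩ : FIG G) ⟶ (iota G).obj X)
    (β : X ⟶ Y) :
    ((q ≫ (iota G).map β).1 0 = 0 ∧ (q ≫ (iota G).map β).2 0 = 1) ↔ (q.1 0 = 0 ∧ q.2 0 = 1) := by
  rw [comp_fst, iota_map_fst_eq_zero_iff]
  exact and_congr_right fun h => by simp [h]

theorem tail_fst_ne_zero {X : FIG G} {q : (⟨m + 1⟩ : FIG G) ⟶ (iota G).obj X}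
    (hq : q.1 0 = 0) (t : Fin m) : (tail q).1 t ≠ 0 :=
  hq ▸ tail_fst_ne_head q t

end Morphisms

variable [Group G] (k : Type) [CommRing k]

section Coordinates

variable {m : ℕ} {Y Z : FIG G}

noncomputable def coord (r : (⟨m⟩ : FIG G) ⟶ Y) : (free k G m).obj Y →ₗ[k] k := Finsupp.lapply r

variable {k}

theorem free_obj_ext {x y : (free k G m).obj Y} (h : ∀ r, coord k r x = coord k r y) : x = y :=
  Finsupp.ext h

@[simp] theorem coord_freeMk_self (r : (⟨m⟩ : FIG G) ⟶ Y) :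
    coord k r (ModuleCat.freeMk r) = 1 :=
  Finsupp.single_eq_same

theorem coord_freeMk_of_ne {r r' : (⟨m⟩ : FIG G) ⟶ Y} (h : r' ≠ r) :
    coord k r (ModuleCat.freeMk r') = 0 :=
  Finsupp.single_eq_of_ne h.symm

@[simp] theorem free_map_freeMk (β : Y ⟶ Z) (r : (⟨m⟩ : FIG G) ⟶ Y) :
    (free k G m).map β (ModuleCat.freeMk r) = ModuleCat.freeMk (r ≫ β) :=
  ModuleCat.free_map_apply _ r

@[simp] theorem coord_comp_free_map (β : Y ⟶ Z) (r : (⟨m⟩ : FIG G) ⟶ Y) (x : (free k G m).obj Y) :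
    coord k (r ≫ β) ((free k G m).map β x) = coord k r x :=
  Finsupp.mapDomain_apply (fun _ _ h => (cancel_mono β).1 h) _ _

theorem coord_free_map_of_notMem_range (β : Y ⟶ Z) {q : (⟨m⟩ : FIG G) ⟶ Z}
    (hq : ¬∃ r, r ≫ β = q) (x : (free k G m).obj Y) : coord k q ((free k G m).map β x) = 0 :=
  Finsupp.mapDomain_of_notMem_range _ _ hq

theorem hom_apply_eq_sum [Finite G] {M : ModuleCat k} (f : (free k G m).obj Y ⟶ M)
    (x : (free k G m).obj Y) : f x = ∑ r, coord k r x • f (ModuleCat.freeMk r) :=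
  ModuleCat.free_hom_apply_eq_sum (α := (⟨m⟩ : FIG G) ⟶ Y) f x

end Coordinates

section Counits

noncomputable def eps₁ (m : ℕ) : (S k G).obj (free k G m) ⟶ free k G m :=
  ModuleCat.freeNatTransOfPartial k (A := iota G ⋙ coyoneda.obj (Opposite.op ⟨m⟩))
    (fun X (q : (⟨m⟩ : FIG G) ⟶ (iota G).obj X) => ∀ t, q.1 t ≠ 0)
    (fun _ q hq => unshift q hq)
    (fun β q => forall_congr' fun t => (iota_map_fst_eq_zero_iff β (q.1 t)).not)
    (fun β q hq => unshift_comp q hq β _)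

noncomputable def eps₂ (m : ℕ) : (S k G).obj (free k G (m + 1)) ⟶ free k G m :=
  ModuleCat.freeNatTransOfPartial k (A := iota G ⋙ coyoneda.obj (Opposite.op ⟨m + 1⟩))
    (fun X (q : (⟨m + 1⟩ : FIG G) ⟶ (iota G).obj X) => q.1 0 = 0 ∧ q.2 0 = 1)
    (fun _ q hq => unshift (tail q) (tail_fst_ne_zero hq.1))
    (fun β q => comp_iota_map_head_iff q β)
    (fun β q _ => unshift_comp (tail q) _ β _)

variable {k} {m : ℕ} {X : FIG G}

theorem eps₁_app_freeMk_of_forall_ne {q : (⟨m⟩ : FIG G) ⟶ (iota G).obj X} (hq : ∀ t, q.1 t ≠ 0) :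
    (eps₁ k m).app X (ModuleCat.freeMk q) = ModuleCat.freeMk (unshift q hq) :=
  ModuleCat.freeMapOfPartial_freeMk_of_pos (a := q) hq

theorem eps₁_app_freeMk_of_eq_zero {q : (⟨m⟩ : FIG G) ⟶ (iota G).obj X} {t : Fin m}
    (ht : q.1 t = 0) : (eps₁ k m).app X (ModuleCat.freeMk q) = 0 :=
  ModuleCat.freeMapOfPartial_freeMk_of_neg (a := q) fun h => h t ht

theorem eps₂_app_freeMk_of_head {q : (⟨m + 1⟩ : FIG G) ⟶ (iota G).obj X}
    (hq : q.1 0 = 0 ∧ q.2 0 = 1) :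
    (eps₂ k m).app X (ModuleCat.freeMk q) =
      ModuleCat.freeMk (unshift (tail q) (tail_fst_ne_zero hq.1)) :=
  ModuleCat.freeMapOfPartial_freeMk_of_pos (a := q) hq

theorem eps₂_app_freeMk_of_not_head {q : (⟨m + 1⟩ : FIG G) ⟶ (iota G).obj X}
    (hq : ¬(q.1 0 = 0 ∧ q.2 0 = 1)) : (eps₂ k m).app X (ModuleCat.freeMk q) = 0 :=
  ModuleCat.freeMapOfPartial_freeMk_of_neg (a := q) hq

theorem eps₂_app_freeMk_eq_eps₁ {q : (⟨m + 1⟩ : FIG G) ⟶ (iota G).obj X}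
    (hq : q.1 0 = 0 ∧ q.2 0 = 1) :
    (eps₂ k m).app X (ModuleCat.freeMk q) = (eps₁ k m).app X (ModuleCat.freeMk (tail q)) := by
  rw [eps₂_app_freeMk_of_head hq, eps₁_app_freeMk_of_forall_ne]

theorem eps₁_app_freeMk_comp_succHom (v : (⟨m⟩ : FIG G) ⟶ X) :
    (eps₁ k m).app X (ModuleCat.freeMk (v ≫ succHom X)) = ModuleCat.freeMk v := by
  rw [eps₁_app_freeMk_of_forall_ne (by simp -proj)]
  exact congrArg _ ((unshift_eq_iff _ _ v).2 rfl)

theorem eps₂_app_freeMk_comp_succHom (v : (⟨m + 1⟩ : FIG G) ⟶ X) :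
    (eps₂ k m).app X (ModuleCat.freeMk (v ≫ succHom X)) = 0 :=
  eps₂_app_freeMk_of_not_head fun h => succHom_fst_ne_zero X _ h.1

theorem eps₂_app_freeMk_comp_swapHom (v : (⟨m + 1⟩ : FIG G) ⟶ X) :
    (eps₂ k m).app X (ModuleCat.freeMk (v ≫ swapHom X (v.1 0) (v.2 0))) =
      ModuleCat.freeMk (tail v) := by
  rw [eps₂_app_freeMk_of_head ((comp_swapHom_head_iff v _ _).2 ⟨rfl, rfl⟩),
    (unshift_eq_iff _ _ _).2]
  refine hom_ext (fun t => ?_) (fun t => ?_) <;> simp -proj [v.1.injective.eq_iff]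

end Counits

section Splitting

variable {k} {m : ℕ} {V W : FIG G ⥤ ModuleCat k}

instance : (S k G).Additive :=
  inferInstanceAs ((Functor.whiskeringLeft _ _ (ModuleCat k)).obj (iota G)).Additive

theorem app_map_iota_map (φ : (S k G).obj V ⟶ free k G m) {Y Z : FIG G} (β : Y ⟶ Z)
    (v : V.obj ((iota G).obj Y)) :
    φ.app Z (V.map ((iota G).map β) v) = (free k G m).map β (φ.app Y v) :=
  NatTrans.naturality_apply φ β v

theorem app_map_map_eq_of_comp_eq (φ : (S k G).obj V ⟶ free k G m) {Y Z : FIG G} {β : Y ⟶ Z}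
    {γ : Z ⟶ (iota G).obj Z} {δ : Y ⟶ (iota G).obj Y} (h : β ≫ γ = δ ≫ (iota G).map β)
    (v : V.obj Y) :
    φ.app Z (V.map γ (V.map β v)) = (free k G m).map β (φ.app Y (V.map δ v)) := by
  rw [← ConcreteCategory.comp_apply, ← V.map_comp, h, V.map_comp, ConcreteCategory.comp_apply,
    app_map_iota_map]

noncomputable def psi₁ (φ : (S k G).obj V ⟶ free k G m) : V ⟶ free k G m where
  app Y := V.map (succHom Y) ≫ φ.app Y
  naturality Y Z β := by
    ext v
    exact app_map_map_eq_of_comp_eq φ (comp_succHom β) v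

theorem psi₁_map_comp (f : V ⟶ W) (φ : (S k G).obj W ⟶ free k G m) :
    psi₁ ((S k G).map f ≫ φ) = f ≫ psi₁ φ := by
  ext Y : 2
  exact f.naturality_assoc (succHom Y) (φ.app Y)

noncomputable def coeff (φ : (S k G).obj V ⟶ free k G m) {Y : FIG G}
    (p : (⟨m + 1⟩ : FIG G) ⟶ Y) : V.obj Y →ₗ[k] k :=
  coord k (tail p) ∘ₗ
    (V.map (swapHom Y (p.1 0) (p.2 0)) ≫ φ.app Y - V.map (succHom Y) ≫ φ.app Y).hom

theorem coeff_apply (φ : (S k G).obj V ⟶ free k G m) {Y : FIG G} (p : (⟨m + 1⟩ : FIG G) ⟶ Y)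
    (v : V.obj Y) :
    coeff φ p v = coord k (tail p) (φ.app Y (V.map (swapHom Y (p.1 0) (p.2 0)) v)) -
      coord k (tail p) (φ.app Y (V.map (succHom Y) v)) :=
  rfl

theorem coeff_comp (φ : (S k G).obj V ⟶ free k G m) {Y Z : FIG G} (β : Y ⟶ Z)
    (p : (⟨m + 1⟩ : FIG G) ⟶ Y) (v : V.obj Y) : coeff φ (p ≫ β) (V.map β v) = coeff φ p v := by
  rw [coeff_apply, coeff_apply,
    app_map_map_eq_of_comp_eq φ (γ := swapHom Z ((p ≫ β).1 0) ((p ≫ β).2 0)) (comp_swapHom β _ _),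
    app_map_map_eq_of_comp_eq φ (comp_succHom β), tail_comp, coord_comp_free_map,
    coord_comp_free_map]

theorem coeff_eq_zero_of_not_factor (φ : (S k G).obj V ⟶ free k G m) {Y Z : FIG G} (β : Y ⟶ Z)
    {q : (⟨m + 1⟩ : FIG G) ⟶ Z} (hq : ¬∃ p, p ≫ β = q) (v : V.obj Y) :
    coeff φ q (V.map β v) = 0 := by
  -- If `q 0 = β s`, both terms are images under `β`, whose `tail q`-coordinates vanish since
  -- `tail q` does not factor through `β`; otherwise `a` and `u` agree after `β`.
  rw [coeff_apply]
  by_cases hhead : q.1 0 ∈ Set.range β.1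
  · obtain ⟨s, hs⟩ := hhead
    have htail : ¬∃ r, r ≫ β = tail q := by
      rintro ⟨r, hr⟩
      refine hq ((exists_comp_eq_iff β q).2 fun t => ?_)
      cases t using Fin.cases with
      | zero => exact ⟨s, hs⟩
      | succ t => exact ⟨r.1 t, congr(($hr).1 t)⟩
    have hswap : β ≫ swapHom Z (q.1 0) (q.2 0) =
        swapHom Y s ((β.2 s)⁻¹ * q.2 0) ≫ (iota G).map β := by
      rw [← comp_swapHom, hs, mul_inv_cancel_left]
    rw [app_map_map_eq_of_comp_eq φ hswap, app_map_map_eq_of_comp_eq φ (comp_succHom β),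
      coord_free_map_of_notMem_range β htail, coord_free_map_of_notMem_range β htail, sub_zero]
  · rw [← ConcreteCategory.comp_apply, ← V.map_comp, comp_swapHom_of_notMem_range β hhead,
      V.map_comp, ConcreteCategory.comp_apply, sub_self]

theorem coeff_map_comp (f : V ⟶ W) (φ : (S k G).obj W ⟶ free k G m) {Y : FIG G}
    (p : (⟨m + 1⟩ : FIG G) ⟶ Y) (v : V.obj Y) :
    coeff ((S k G).map f ≫ φ) p v = coeff φ p (f.app Y v) := by
  have hf (γ : Y ⟶ (iota G).obj Y) :
      ((S k G).map f ≫ φ).app Y (V.map γ v) = φ.app Y (W.map γ (f.app Y v)) :=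
    congrArg (φ.app Y) (NatTrans.naturality_apply f γ v)
  rw [coeff_apply, coeff_apply, hf, hf]

variable [Finite G]

noncomputable def psi₂App (φ : (S k G).obj V ⟶ free k G m) (Y : FIG G) :
    V.obj Y ⟶ (free k G (m + 1)).obj Y :=
  ModuleCat.ofHom <|
    (Finsupp.linearEquivFunOnFinite k k ((⟨m + 1⟩ : FIG G) ⟶ Y)).symm.toLinearMap ∘ₗ
      LinearMap.pi fun p => coeff φ p

@[simp] theorem coord_psi₂App (φ : (S k G).obj V ⟶ free k G m) {Y : FIG G} (v : V.obj Y)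
    (q : (⟨m + 1⟩ : FIG G) ⟶ Y) : coord k q (psi₂App φ Y v) = coeff φ q v :=
  rfl

noncomputable def psi₂ (φ : (S k G).obj V ⟶ free k G m) : V ⟶ free k G (m + 1) where
  app := psi₂App φ
  naturality Y Z β := by
    ext v : 2
    refine free_obj_ext fun q => ?_
    change coord k q (psi₂App φ Z (V.map β v)) =
      coord k q ((free k G (m + 1)).map β (psi₂App φ Y v))
    by_cases hq : ∃ p, p ≫ β = q
    · obtain ⟨p, rfl⟩ := hq
      rw [coord_comp_free_map, coord_psi₂App, coord_psi₂App, coeff_comp]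
    · rw [coord_free_map_of_notMem_range β hq, coord_psi₂App, coeff_eq_zero_of_not_factor φ β hq]

theorem psi₂_map_comp (f : V ⟶ W) (φ : (S k G).obj W ⟶ free k G m) :
    psi₂ ((S k G).map f ≫ φ) = f ≫ psi₂ φ :=
  NatTrans.ext <| funext fun _ => ModuleCat.hom_ext <| LinearMap.ext fun v =>
    free_obj_ext fun q => coeff_map_comp f φ q v

end Splitting

section Identities

variable (m : ℕ)

theorem psi₁_eps₁ : psi₁ (eps₁ k m) = 𝟙 (free k G m) := by
  ext X : 2
  refine ModuleCat.free_hom_ext fun v => ?_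
  change (eps₁ k m).app X ((free k G m).map (succHom X) (ModuleCat.freeMk v)) = ModuleCat.freeMk v
  rw [free_map_freeMk, eps₁_app_freeMk_comp_succHom]

theorem psi₁_eps₂ : psi₁ (eps₂ (G := G) k m) = 0 := by
  ext X : 2
  refine ModuleCat.free_hom_ext fun v => ?_
  change (eps₂ k m).app X ((free k G (m + 1)).map (succHom X) (ModuleCat.freeMk v)) = 0
  rw [free_map_freeMk, eps₂_app_freeMk_comp_succHom]

variable {k m}

theorem coeff_eps₁_freeMk {X : FIG G} (v : (⟨m⟩ : FIG G) ⟶ X) (q : (⟨m + 1⟩ : FIG G) ⟶ X) :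
    coeff (eps₁ k m) q (ModuleCat.freeMk v) = 0 := by
  refine (coeff_apply _ _ _).trans ?_
  rw [free_map_freeMk, free_map_freeMk, eps₁_app_freeMk_comp_succHom]
  by_cases hs : q.1 0 ∈ Set.range v.1
  · obtain ⟨t, ht⟩ := hs
    have hne : v ≠ tail q := fun h => tail_fst_ne_head q t (h ▸ ht)
    rw [eps₁_app_freeMk_of_eq_zero (t := t) (by simp -proj [ht]), map_zero,
      coord_freeMk_of_ne hne, sub_zero]
  · rw [comp_swapHom_of_notMem_range v hs, eps₁_app_freeMk_comp_succHom, sub_self]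

theorem coeff_eps₂_freeMk {X : FIG G} (v q : (⟨m + 1⟩ : FIG G) ⟶ X) :
    coeff (eps₂ k m) q (ModuleCat.freeMk v) = coord k q (ModuleCat.freeMk v) := by
  refine (coeff_apply _ _ _).trans ?_
  rw [free_map_freeMk, free_map_freeMk, eps₂_app_freeMk_comp_succHom, map_zero (coord k _),
    sub_zero]
  by_cases hhead : v.1 0 = q.1 0 ∧ v.2 0 = q.2 0
  · obtain ⟨h₁, h₂⟩ := hhead
    rw [← h₁, ← h₂, eps₂_app_freeMk_comp_swapHom]
    by_cases htail : tail v = tail q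
    · obtain rfl := hom_eq_iff_head_tail.2 ⟨h₁, h₂, htail⟩
      rw [coord_freeMk_self, coord_freeMk_self]
    · rw [coord_freeMk_of_ne htail, coord_freeMk_of_ne fun h => htail (congrArg tail h)]
  · rw [eps₂_app_freeMk_of_not_head (mt (comp_swapHom_head_iff v _ _).1 hhead), map_zero,
      coord_freeMk_of_ne fun h => hhead (by subst h; exact ⟨rfl, rfl⟩)]

variable [Finite G] (k m)

theorem psi₂_eps₁ : psi₂ (eps₁ (G := G) k m) = 0 := by
  ext X : 2
  refine ModuleCat.free_hom_ext fun v => free_obj_ext fun q => ?_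
  exact (coeff_eps₁_freeMk v q).trans (map_zero _).symm

theorem psi₂_eps₂ : psi₂ (eps₂ k m) = 𝟙 (free k G (m + 1)) := by
  ext X : 2
  refine ModuleCat.free_hom_ext fun v => free_obj_ext fun q => ?_
  exact coeff_eps₂_freeMk v q

end Identities

variable {k} {m : ℕ} {V : FIG G ⥤ ModuleCat k} [Finite G]

theorem sum_coord_tail_smul_eps₂ {X : FIG G} (z : (free k G m).obj ((iota G).obj X)) :
    ∑ p, coord k (tail p) z • (eps₂ k m).app X (ModuleCat.freeMk p) = (eps₁ k m).app X z := by
  have head_of_ne {p : (⟨m + 1⟩ : FIG G) ⟶ (iota G).obj X}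
      (hp : coord k (tail p) z • (eps₂ k m).app X (ModuleCat.freeMk p) ≠ 0) :
      p.1 0 = 0 ∧ p.2 0 = 1 :=
    not_not.1 fun h => right_ne_zero_of_smul hp (eps₂_app_freeMk_of_not_head h)
  -- `tail` is a bijection from the basis vectors not killed by `ε₂` onto those missing `0`.
  refine Eq.trans ?_ (hom_apply_eq_sum ((eps₁ k m).app X) z).symm
  refine Finset.sum_bij_ne_zero (fun p _ _ => tail p) (fun _ _ _ => Finset.mem_univ _)
    (fun p₁ _ hp₁ p₂ _ hp₂ h => ?_) (fun r _ hr => ?_) (fun p _ hp => ?_)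
  · obtain ⟨h₁, h₂⟩ := head_of_ne hp₁
    obtain ⟨h₁', h₂'⟩ := head_of_ne hp₂
    exact hom_eq_iff_head_tail.2 ⟨h₁.trans h₁'.symm, h₂.trans h₂'.symm, h⟩
  · have hr0 : ∀ t, r.1 t ≠ 0 := fun t ht =>
      right_ne_zero_of_smul hr (eps₁_app_freeMk_of_eq_zero ht)
    refine ⟨zeroCons r hr0, Finset.mem_univ _, ?_, tail_zeroCons r hr0⟩
    exact (congrArg (coord k r z • ·) (eps₂_app_freeMk_eq_eps₁ ⟨rfl, rfl⟩)).trans_ne hr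
  · exact congrArg _ (eps₂_app_freeMk_eq_eps₁ (head_of_ne hp))

theorem map_psi₁_comp_eps₁_add_map_psi₂_comp_eps₂ (φ : (S k G).obj V ⟶ free k G m) :
    (S k G).map (psi₁ φ) ≫ eps₁ k m + (S k G).map (psi₂ φ) ≫ eps₂ k m = φ := by
  ext X : 2
  refine ModuleCat.hom_ext (LinearMap.ext fun (v : V.obj ((iota G).obj X)) => ?_)
  change (eps₁ k m).app X ((psi₁ φ).app _ v) + (eps₂ k m).app X ((psi₂ φ).app _ v) = φ.app X v
  set x := (free k G m).map (succHom X) (φ.app X v)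
  set y := (psi₁ φ).app ((iota G).obj X) v
  -- `ε₂` kills every basis vector but those with `p 0 = 0` and label `1`, and for these
  -- `a_{0,1} = ι u`, so that naturality of `φ` rewrites the first term of the coefficient.
  have hcoeff (p : (⟨m + 1⟩ : FIG G) ⟶ (iota G).obj X) :
      coeff φ p v • (eps₂ k m).app X (ModuleCat.freeMk p) =
        (coord k (tail p) x - coord k (tail p) y) • (eps₂ k m).app X (ModuleCat.freeMk p) := by
    by_cases hp : p.1 0 = 0 ∧ p.2 0 = 1
    · rw [coeff_apply, hp.1, hp.2, swapHom_zero_one, app_map_iota_map]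
      rfl
    · rw [eps₂_app_freeMk_of_not_head hp, smul_zero, smul_zero]
  calc (eps₁ k m).app X y + (eps₂ k m).app X ((psi₂ φ).app _ v)
      = (eps₁ k m).app X y + ∑ p, (coord k (tail p) x - coord k (tail p) y) •
          (eps₂ k m).app X (ModuleCat.freeMk p) :=
        congrArg (_ + ·) ((hom_apply_eq_sum ((eps₂ k m).app X) _).trans
          (Finset.sum_congr rfl fun p _ => hcoeff p))
    _ = (eps₁ k m).app X x := by
        simp only [sub_smul, Finset.sum_sub_distrib, sum_coord_tail_smul_eps₂, add_sub_cancel]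
    _ = φ.app X v := ConcreteCategory.congr_hom (congr_app (psi₁_eps₁ k m) X) (φ.app X v)

end FIG

/-- **Theorem (coinduction on free modules for `FI_G`).**
Let `k` be a commutative ring, `G` a finite group and `C = FI_G`. For every `m ∈ ℕ`,
if `Q` is a right adjoint of the shift functor `S` (the coinduction functor), then
`Q(kC e_m)` is isomorphic, as a `C`-module, to `kC e_m ⊕ kC e_{m+1}`. -/
theorem FIG.coinduction_of_free (k : Type) [CommRing k] (G : Type) [Group G] [Finite G]
    (m : ℕ) (Q : (FIG G ⥤ ModuleCat k) ⥤ (FIG G ⥤ ModuleCat k)) (adj : FIG.S k G ⊣ Q) :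
    Nonempty (Q.obj (FIG.free k G m) ≅ FIG.free k G m ⊞ FIG.free k G (m + 1)) :=
  adj.nonempty_iso_biprod_of_splitting (FIG.eps₁ k m) (FIG.eps₂ k m) FIG.psi₁ FIG.psi₂
    FIG.psi₁_map_comp FIG.psi₂_map_comp (FIG.psi₁_eps₁ k m) (FIG.psi₂_eps₁ k m) (FIG.psi₁_eps₂ k m)
    (FIG.psi₂_eps₂ k m) FIG.map_psi₁_comp_eps₁_add_map_psi₂_comp_eps₂
end

section
/- Let k be a commutative ring and let C be an EI category with object set ℕ satisfying the standing conditions, and assume C is locally Noetherian over k. Let V be a finitely generated C-module. Then V is an injective object of the category of all C-modules if and only if V is an injective object of the full subcategory of finitely generated C-modules. -/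
open CategoryTheory CategoryTheory.Limits

attribute [local instance] CategoryTheory.Abelian.hasFiniteBiproducts

section EI

variable [Category.{0} ℕ]

/-- The standing conditions on the category `C` (whose set of objects is `ℕ`):
every endomorphism is an isomorphism (`C` is an EI category); `C(m,n) = ∅` when
`m > n`; `C(m,n)` is a nonempty finite set when `m ≤ n`; and for `m ≤ l ≤ n` the
composition map `C(l,n) × C(m,l) → C(m,n)` is surjective. -/
def EIStanding : Prop :=
  (∀ (n : ℕ) (f : n ⟶ n), IsIso f) ∧
  (∀ ⦃m n : ℕ⦄, n < m → IsEmpty (m ⟶ n)) ∧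
  (∀ ⦃m n : ℕ⦄, m ≤ n → Nonempty (m ⟶ n)) ∧
  (∀ m n : ℕ, Finite (m ⟶ n)) ∧
  (∀ ⦃m l n : ℕ⦄, m ≤ l → l ≤ n → ∀ h : m ⟶ n, ∃ (g : m ⟶ l) (f : l ⟶ n), g ≫ f = h)

/-- The free `C`-module `kC e_n`, sending `m` to the free `k`-module on the
hom-set `C(n, m)`. -/
noncomputable def EIfree (k : Type) [CommRing k] (n : ℕ) : ℕ ⥤ ModuleCat k :=
  coyoneda.obj (Opposite.op n) ⋙ ModuleCat.free k

/-- A `C`-module is finitely generated if it admits an epimorphism from a finite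
direct sum `⨁ᵢ kC e_{nᵢ}` of free modules. -/
noncomputable def EIFinGen (k : Type) [CommRing k] (V : ℕ ⥤ ModuleCat k) : Prop :=
  ∃ (r : ℕ) (a : Fin r → ℕ) (p : (⨁ fun i : Fin r => EIfree k (a i)) ⟶ V), Epi p

/-- `C` is locally Noetherian over `k`: every subfunctor of a finitely generated
`C`-module is finitely generated, i.e. the source of any monomorphism into a
finitely generated `C`-module is finitely generated. -/
noncomputable def EILocNoeth (k : Type) [CommRing k] : Prop :=
  ∀ (V W : ℕ ⥤ ModuleCat k) (f : W ⟶ V), Mono f → EIFinGen k V → EIFinGen k W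

/-- The full subcategory `C_n` of `C` on the objects `{0, 1, …, n}`. -/
abbrev EIsub (n : ℕ) := ObjectProperty.FullSubcategory (fun m : ℕ => m ≤ n)

/-- A `C`-module (resp. `C_n`-module) is finite dimensional over a field `k` if
all its values are finite dimensional and all but finitely many vanish. -/
def EIFinDim (k : Type) [Field k] (V : ℕ ⥤ ModuleCat k) : Prop :=
  (∀ m : ℕ, Module.Finite k (V.obj m)) ∧ ∃ N : ℕ, ∀ m : ℕ, N < m → IsZero (V.obj m)

/-- `C` satisfies the transitivity condition: for each `n`, the group `C(n+1,n+1)`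
acts transitively on `C(n,n+1)` by postcomposition. -/
def EITransitive : Prop :=
  ∀ (n : ℕ) (f g : (n : ℕ) ⟶ (n + 1 : ℕ)), ∃ h : (n + 1 : ℕ) ⟶ (n + 1 : ℕ), f ≫ h = g

/-- `0` is an initial object of `C`: `C(0,n)` is a singleton for every `n`. -/
def EIInitialZero : Prop :=
  ∀ n : ℕ, Nonempty ((0 : ℕ) ⟶ n) ∧ Subsingleton ((0 : ℕ) ⟶ n)

end EI

/-!
Finitely generated modules are closed under subobjects, so a monomorphism between finitely
generated modules is a monomorphism of `C`-modules; this gives one direction.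

Conversely, let `V` be injective among finitely generated modules, `i : X ⟶ Y` a monomorphism and
`f : X ⟶ V`. Natural partial extensions of `f` along `i`, encoded by their graphs in `Y × V`, have
a maximal element by Zorn's lemma. It is total: to reach `y ∈ Y(j₀)`, let `W ⊆ kC e_{j₀}` consist
of the elements whose image under `kC e_{j₀} → Y, 𝟙 ↦ y` lies in the current domain. By local
Noetherianity `W` is finitely generated, so the partial map restricted to `W` extends to
`kC e_{j₀}`, and the two maps glue along their common domain.
-/

universe u

namespace Submodule

variable {R M N : Type*} [Ring R] [AddCommGroup M] [AddCommGroup N] [Module R M] [Module R N]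

/-- The graph condition, in the form taken by `Submodule.toLinearPMap`. -/
def IsFunctional (Γ : Submodule R (M × N)) : Prop :=
  ∀ x ∈ Γ, x.1 = 0 → x.2 = 0

lemma IsFunctional.eq_of_mem {Γ : Submodule R (M × N)} (hΓ : Γ.IsFunctional) {x : M} {v w : N}
    (hv : (x, v) ∈ Γ) (hw : (x, w) ∈ Γ) : v = w :=
  sub_eq_zero.1 (hΓ _ (Γ.sub_mem hv hw) (sub_self x))

lemma isFunctional_sup {Γ₁ Γ₂ : Submodule R (M × N)}
    (hagree : ∀ x v w, (x, v) ∈ Γ₁ → (x, w) ∈ Γ₂ → v = w) : (Γ₁ ⊔ Γ₂).IsFunctional := by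
  intro z hz hz0
  obtain ⟨⟨x₁, v₁⟩, h₁, ⟨x₂, v₂⟩, h₂, rfl⟩ := mem_sup.1 hz
  have hx : x₂ = -x₁ := eq_neg_of_add_eq_zero_right hz0
  have : -v₁ = v₂ := hagree x₂ (-v₁) v₂ (by simpa [hx] using Γ₁.neg_mem h₁) h₂
  simp [← this]

lemma mem_sSup_apply_iff_of_isChain {ι : Type*} {E : ι → Type*} [∀ i, AddCommGroup (E i)]
    [∀ i, Module R (E i)] {c : Set (∀ i, Submodule R (E i))} (hc : IsChain (· ≤ ·) c)
    (hne : c.Nonempty) {i : ι} {x : E i} : x ∈ sSup c i ↔ ∃ Γ ∈ c, x ∈ Γ i := by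
  have : Nonempty c := hne.to_subtype
  rw [sSup_apply, mem_iSup_of_directed]
  · simp
  · exact hc.directedOn.directed_val.mono_comp _ fun _ _ h => h i

end Submodule

namespace CategoryTheory

open ZeroObject in
theorem injective_fullSubcategory_of_injective {C : Type*} [Category* C]
    [Abelian C] {P : ObjectProperty C} [P.IsClosedUnderSubobjects] {V : C} (hV : P V)
    (hinj : Injective V) : Injective (⟨V, hV⟩ : P.FullSubcategory) := by
  have : P.ContainsZero := ⟨⟨_, isZero_zero C, P.prop_of_mono (0 : 0 ⟶ V) hV⟩⟩
  have := P.preservesMonomorphisms_ι_of_isNormalEpiCategory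
  exact P.ι.injective_of_map_injective hinj

section Relations

variable {J : Type*} [Category* J] {R : Type u} [Ring R]

structure Functor.Submodule (Y : J ⥤ ModuleCat.{u} R) where
  obj (j : J) : _root_.Submodule R (Y.obj j)
  map_mem {i j : J} (h : i ⟶ j) {x : Y.obj i} : x ∈ obj i → Y.map h x ∈ obj j

namespace Functor.Submodule

variable {Y : J ⥤ ModuleCat.{u} R} (N : Y.Submodule)

noncomputable def toFunctor : J ⥤ ModuleCat.{u} R where
  obj j := ModuleCat.of R (N.obj j)
  map h := ModuleCat.ofHom ((Y.map h).hom.restrict fun _ => N.map_mem h)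
  map_id j := by ext x; exact congr($(Y.map_id j) x.1)
  map_comp h h' := by ext x; exact congr($(Y.map_comp h h') x.1)

noncomputable def ι : N.toFunctor ⟶ Y where
  app j := ModuleCat.ofHom (N.obj j).subtype

instance : Mono N.ι :=
  have (j : J) : Mono (N.ι.app j) :=
    (ModuleCat.mono_iff_injective _).2 (N.obj j).injective_subtype
  NatTrans.mono_of_mono_app _

end Functor.Submodule

variable {F Y V : J ⥤ ModuleCat.{u} R}

def IsNaturalRel (Γ : ∀ j, Submodule R (Y.obj j × V.obj j)) : Prop :=
  ∀ ⦃i j : J⦄ (h : i ⟶ j), Γ i ≤ (Γ j).comap ((Y.map h).hom.prodMap (V.map h).hom)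

lemma IsNaturalRel.map_mem {Γ : ∀ j, Submodule R (Y.obj j × V.obj j)} (hΓ : IsNaturalRel Γ)
    {i j : J} (h : i ⟶ j) {x : Y.obj i} {v : V.obj i} (hxv : (x, v) ∈ Γ i) :
    (Y.map h x, V.map h v) ∈ Γ j :=
  hΓ h hxv

lemma IsNaturalRel.sSup {c : Set (∀ j, Submodule R (Y.obj j × V.obj j))}
    (hc : ∀ Γ ∈ c, IsNaturalRel Γ) : IsNaturalRel (sSup c) := by
  intro i j h
  simp only [sSup_apply]
  exact iSup_le fun Γ =>
    (hc Γ Γ.2 h).trans (Submodule.comap_mono (le_iSup (fun Γ : c => Γ.1 j) Γ))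

lemma IsNaturalRel.sup {Γ₁ Γ₂ : ∀ j, Submodule R (Y.obj j × V.obj j)} (h₁ : IsNaturalRel Γ₁)
    (h₂ : IsNaturalRel Γ₂) : IsNaturalRel (Γ₁ ⊔ Γ₂) := by
  rw [← sSup_pair]
  exact IsNaturalRel.sSup (by rintro Γ (rfl | rfl) <;> assumption)

def jointRange (a : F ⟶ Y) (b : F ⟶ V) (j : J) :
    Submodule R (Y.obj j × V.obj j) :=
  LinearMap.range ((a.app j).hom.prod (b.app j).hom)

lemma mem_jointRange {a : F ⟶ Y} {b : F ⟶ V} {j : J} {x : Y.obj j} {v : V.obj j} :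
    (x, v) ∈ jointRange a b j ↔ ∃ z, a.app j z = x ∧ b.app j z = v := by
  simp [jointRange]

lemma isNaturalRel_jointRange (a : F ⟶ Y) (b : F ⟶ V) :
    IsNaturalRel (jointRange a b) := by
  rintro i j h _ ⟨z, rfl⟩
  exact ⟨F.map h z, by simp [NatTrans.naturality_apply]⟩

/-- `φ` followed by the partial map with graph `Γ`. -/
noncomputable def natTransOfGraph (Γ : ∀ j, Submodule R (Y.obj j × V.obj j))
    (hnat : IsNaturalRel Γ) (hfun : ∀ j, (Γ j).IsFunctional) (φ : F ⟶ Y)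
    (hφ : ∀ j a, φ.app j a ∈ (Γ j).map (LinearMap.fst R _ _)) : F ⟶ V where
  app j := ModuleCat.ofHom ((Γ j).toLinearPMap.toFun ∘ₗ (φ.app j).hom.codRestrict _ (hφ j))
  naturality i j h := by
    ext a
    have h₁ := (Γ j).mem_graph_toLinearPMap (hfun j) ⟨_, hφ j (F.map h a)⟩
    have h₂ := hnat.map_mem h ((Γ i).mem_graph_toLinearPMap (hfun i) ⟨_, hφ i a⟩)
    rw [← NatTrans.naturality_apply] at h₂
    exact (hfun j).eq_of_mem h₁ h₂

lemma natTransOfGraph_mem (Γ : ∀ j, Submodule R (Y.obj j × V.obj j))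
    (hnat : IsNaturalRel Γ) (hfun : ∀ j, (Γ j).IsFunctional) (φ : F ⟶ Y)
    (hφ : ∀ j a, φ.app j a ∈ (Γ j).map (LinearMap.fst R _ _)) {j : J} (a : F.obj j) :
    (φ.app j a, (natTransOfGraph Γ hnat hfun φ hφ).app j a) ∈ Γ j :=
  (Γ j).mem_graph_toLinearPMap (hfun j) ⟨_, hφ j a⟩

def preimageDomain (Γ : ∀ j, Submodule R (Y.obj j × V.obj j)) (hΓ : IsNaturalRel Γ)
    (φ : F ⟶ Y) : F.Submodule where
  obj j := ((Γ j).map (LinearMap.fst R _ _)).comap (φ.app j).hom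
  map_mem h := by
    rintro a ⟨⟨x, v⟩, hxv, hx⟩
    exact ⟨_, hΓ.map_mem h hxv, by simp_all [NatTrans.naturality_apply]⟩

end Relations

open Opposite

variable {J : Type*} [Category.{u} J] {R : Type u} [Ring R] {Y V : J ⥤ ModuleCat.{u} R}

/-- The paper's `kC e_{j₀}` (`EIfree`), over an arbitrary index category. -/
noncomputable abbrev freeCoyoneda (R : Type u) [Ring R] (j₀ : J) : J ⥤ ModuleCat.{u} R :=
  coyoneda.obj (op j₀) ⋙ ModuleCat.free R

noncomputable def freeCoyonedaDesc {j₀ : J} (y : Y.obj j₀) : freeCoyoneda R j₀ ⟶ Y where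
  app j := ModuleCat.freeDesc (TypeCat.ofHom fun h : j₀ ⟶ j => Y.map h y)
  naturality i j h := by
    refine ModuleCat.free_hom_ext fun g => ?_
    simp

lemma freeCoyonedaDesc_app_freeMk_id {j₀ : J} (y : Y.obj j₀) :
    (freeCoyonedaDesc y).app j₀ (ModuleCat.freeMk (𝟙 j₀)) = y := by
  simp [freeCoyonedaDesc]

variable {P : ObjectProperty (J ⥤ ModuleCat.{u} R)} [P.IsClosedUnderSubobjects]

lemma exists_le_isNaturalRel_mem_domain (hfree : ∀ j, P (freeCoyoneda R j)) (hV : P V)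
    (hinj : Injective (⟨V, hV⟩ : P.FullSubcategory)) (Γ : ∀ j, Submodule R (Y.obj j × V.obj j))
    (hnat : IsNaturalRel Γ) (hfun : ∀ j, (Γ j).IsFunctional) {j₀ : J} (y : Y.obj j₀) :
    ∃ Γ', Γ ≤ Γ' ∧ IsNaturalRel Γ' ∧ (∀ j, (Γ' j).IsFunctional) ∧
      y ∈ (Γ' j₀).map (LinearMap.fst R _ _) := by
  let W := preimageDomain Γ hnat (freeCoyonedaDesc y)
  let φ : W.toFunctor ⟶ V := natTransOfGraph Γ hnat hfun (W.ι ≫ freeCoyonedaDesc y) fun _ a => a.2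
  let W' : P.FullSubcategory := ⟨W.toFunctor, P.prop_of_mono W.ι (hfree j₀)⟩
  let ι' : W' ⟶ ⟨_, hfree j₀⟩ := ObjectProperty.homMk W.ι
  have : Mono ι' := P.ι.mono_of_mono_map (inferInstanceAs (Mono W.ι))
  obtain ⟨e, he⟩ := hinj.factors (ObjectProperty.homMk φ : W' ⟶ _) ι'
  refine ⟨Γ ⊔ jointRange (freeCoyonedaDesc y) e.hom, le_sup_left,
    hnat.sup (isNaturalRel_jointRange _ _), fun j => Submodule.isFunctional_sup ?_,
    ⟨(y, e.hom.app j₀ (ModuleCat.freeMk (𝟙 j₀))), Submodule.mem_sup_right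
      (mem_jointRange.2 ⟨_, freeCoyonedaDesc_app_freeMk_id y, rfl⟩), rfl⟩⟩
  -- `e` extends the restriction of `Γ` to `W`, so it agrees with `Γ` wherever both are defined
  rintro x v w hxv hw
  obtain ⟨a, rfl, rfl⟩ := mem_jointRange.1 hw
  have ha : a ∈ W.obj j := ⟨_, hxv, rfl⟩
  have hea : e.hom.app j a = φ.app j ⟨a, ha⟩ := congr(($he).hom.app j ⟨a, ha⟩)
  rw [hea]
  exact (hfun j).eq_of_mem hxv
    (natTransOfGraph_mem Γ hnat hfun (W.ι ≫ freeCoyonedaDesc y) _ (j := j) ⟨a, ha⟩)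

theorem injective_of_injective_fullSubcategory (hfree : ∀ j, P (freeCoyoneda R j)) (hV : P V)
    (hinj : Injective (⟨V, hV⟩ : P.FullSubcategory)) : Injective V := by
  refine ⟨fun {A B} f i _ => ?_⟩
  let S := {Γ : ∀ j, Submodule R (B.obj j × V.obj j) | IsNaturalRel Γ ∧ ∀ j, (Γ j).IsFunctional}
  have hchain : ∀ c ⊆ S, IsChain (· ≤ ·) c → ∀ Γ₀ ∈ c, ∃ ub ∈ S, ∀ Γ ∈ c, Γ ≤ ub := by
    refine fun c hcS hc Γ₀ hΓ₀ => ⟨sSup c, ⟨.sSup fun Γ hΓ => (hcS hΓ).1, fun j z hz => ?_⟩,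
      fun _ => le_sSup⟩
    obtain ⟨Γ, hΓ, hz⟩ := (Submodule.mem_sSup_apply_iff_of_isChain hc ⟨Γ₀, hΓ₀⟩).1 hz
    exact (hcS hΓ).2 j z hz
  have hbase : jointRange i f ∈ S := by
    refine ⟨isNaturalRel_jointRange i f, fun j _ ⟨x, hx⟩ hx0 => ?_⟩
    subst hx
    have : x = 0 := (ModuleCat.mono_iff_injective (i.app j)).1 inferInstance (by simpa using hx0)
    simp [this]
  obtain ⟨Γ, hle, ⟨hnat, hfun⟩, hmax⟩ := zorn_le_nonempty₀ S hchain _ hbase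
  have htotal (j : J) (y : B.obj j) : y ∈ (Γ j).map (LinearMap.fst R _ _) := by
    obtain ⟨Γ', hΓΓ', hnat', hfun', hy⟩ :=
      exists_le_isNaturalRel_mem_domain hfree hV hinj Γ hnat hfun y
    exact Submodule.map_mono (hmax ⟨hnat', hfun'⟩ hΓΓ' j) hy
  refine ⟨natTransOfGraph Γ hnat hfun (𝟙 B) htotal, ?_⟩
  ext j x
  exact ((hfun j).eq_of_mem (hle j (mem_jointRange.2 ⟨x, rfl, rfl⟩))
    (natTransOfGraph_mem Γ hnat hfun (𝟙 B) htotal _)).symm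

end CategoryTheory

namespace EI

variable [Category.{0} ℕ] {k : Type} [CommRing k]

lemma finGen_free (n : ℕ) : EIFinGen k (EIfree k n) := by
  refine ⟨1, fun _ => n, biproduct.π _ 0, ?_⟩
  exact (IsSplitEpi.mk' ⟨biproduct.ι _ 0, biproduct.ι_π_self _ _⟩).epi

lemma isClosedUnderSubobjects_finGen (hN : EILocNoeth k) :
    ObjectProperty.IsClosedUnderSubobjects (EIFinGen k) :=
  ⟨fun f _ hY => hN _ _ f inferInstance hY⟩

end EI

theorem EI.injective_iff_injective_fg_general [Category.{0} ℕ] (k : Type) [CommRing k]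
    (hN : EILocNoeth k)
    (V : ℕ ⥤ ModuleCat k) (hfg : EIFinGen k V) :
    Injective V ↔ Injective (⟨V, hfg⟩ : ObjectProperty.FullSubcategory (EIFinGen k)) := by
  have := isClosedUnderSubobjects_finGen hN
  exact ⟨injective_fullSubcategory_of_injective hfg,
    injective_of_injective_fullSubcategory finGen_free hfg⟩

/-- **Corollary.** Let `k` be a commutative ring and `C` an EI category with object
set `ℕ` satisfying the standing conditions, locally Noetherian over `k`. A finitely
generated `C`-module `V` is injective in the category of all `C`-modules if and
only if it is injective in the full subcategory of finitely generated `C`-modules. -/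
theorem EI.injective_iff_injective_fg [Category.{0} ℕ] (k : Type) [CommRing k]
    (hC : EIStanding) (hN : EILocNoeth k)
    (V : ℕ ⥤ ModuleCat k) (hfg : EIFinGen k V) :
    Injective V ↔ Injective (⟨V, hfg⟩ : ObjectProperty.FullSubcategory (EIFinGen k)) :=
  EI.injective_iff_injective_fg_general k hN V hfg
end

section
/- Let k be a field of characteristic 0 and let C be an EI category with object set ℕ satisfying the standing conditions. Then every finite-dimensional C-module V admits a finite injective resolution with finite-dimensional terms: there is an exact sequence 0 → V → I^0 → I^1 → ⋯ → I^m → 0 of C-modules in which each I^j is finite dimensional and injective. -/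
open CategoryTheory CategoryTheory.Limits

attribute [local instance] CategoryTheory.Abelian.hasFiniteBiproducts

/-!
The automorphism group `G = Aut n` of an object `n` is finite, and coinduction, sending a
representation `W` of `G` to the `C`-module `m ↦ Hom_G(k C(m,n), W)`, is right adjoint to the
exact functor `V ↦ V(n)`; hence it takes injective representations to injective `C`-modules, and
in characteristic 0 every representation of `G` is injective by Maschke's theorem. If `V` vanishes
beyond `N`, the map `V → ∏_{n ≤ N} coind V(n)` is injective (evaluate at identities) and, because
`C(N,N) = Aut N`, bijective in degree `N`. Its cokernel therefore vanishes from `N` on, and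
induction on `N` splices a resolution of the cokernel onto this embedding.
-/

namespace EI

universe u v w t

section Resolutions

variable {A : Type*} [Category A] [Abelian A]

lemma exact_mk_comp_mono {X Y Z Z' : A} (f : X ⟶ Y) (g : Y ⟶ Z) (h : Z ⟶ Z') [Mono h]
    {w : f ≫ g = 0} (hfg : (ShortComplex.mk f g w).Exact) :
    (ShortComplex.mk f (g ≫ h) (by rw [reassoc_of% w, zero_comp])).Exact := by
  let φ : ShortComplex.mk f g w ⟶
      ShortComplex.mk f (g ≫ h) (by rw [reassoc_of% w, zero_comp]) :=
    { τ₁ := 𝟙 X, τ₂ := 𝟙 Y, τ₃ := h }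
  have : Epi φ.τ₁ := inferInstanceAs (Epi (𝟙 X))
  have : IsIso φ.τ₂ := inferInstanceAs (IsIso (𝟙 Y))
  have : Mono φ.τ₃ := inferInstanceAs (Mono h)
  exact (ShortComplex.exact_iff_of_epi_of_isIso_of_mono φ).1 hfg

lemma exact_mk_epi_comp {X' X Y Z : A} (e : X' ⟶ X) (f : X ⟶ Y) (g : Y ⟶ Z) [Epi e]
    {w : f ≫ g = 0} (hfg : (ShortComplex.mk f g w).Exact) :
    (ShortComplex.mk (e ≫ f) g (by rw [Category.assoc, w, comp_zero])).Exact := by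
  let φ : ShortComplex.mk (e ≫ f) g (by rw [Category.assoc, w, comp_zero]) ⟶
      ShortComplex.mk f g w :=
    { τ₁ := e, τ₂ := 𝟙 Y, τ₃ := 𝟙 Z }
  have : Epi φ.τ₁ := inferInstanceAs (Epi e)
  have : IsIso φ.τ₂ := inferInstanceAs (IsIso (𝟙 Y))
  have : Mono φ.τ₃ := inferInstanceAs (Mono (𝟙 Z))
  exact (ShortComplex.exact_iff_of_epi_of_isIso_of_mono φ).2 hfg

def HasFiniteResolution (P : A → Prop) (V : A) : Prop :=
  ∃ (I : ℕ → A) (d : ∀ i : ℕ, I i ⟶ I (i + 1)) (η : V ⟶ I 0),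
    (∀ i, P (I i)) ∧
    (∃ m : ℕ, ∀ i, m < i → IsZero (I i)) ∧
    Mono η ∧
    (∃ w0 : η ≫ d 0 = 0, (ShortComplex.mk η (d 0) w0).Exact) ∧
    (∀ i : ℕ, ∃ w : d i ≫ d (i + 1) = 0, (ShortComplex.mk (d i) (d (i + 1)) w).Exact)

variable {P : A → Prop}

lemma HasFiniteResolution.of_isZero {V : A} (hV : IsZero V) (hP : P V) :
    HasFiniteResolution P V :=
  ⟨fun _ => V, fun _ => 0, 𝟙 V, fun _ => hP, ⟨0, fun _ _ => hV⟩, inferInstance,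
    ⟨by simp, ShortComplex.exact_of_isZero_X₂ _ hV⟩,
    fun _ => ⟨by simp, ShortComplex.exact_of_isZero_X₂ _ hV⟩⟩

lemma HasFiniteResolution.of_cokernel {V I₀ : A} (η : V ⟶ I₀) [Mono η] (hI₀ : P I₀)
    (h : HasFiniteResolution P (cokernel η)) : HasFiniteResolution P V := by
  obtain ⟨J, dJ, ηQ, hJ, ⟨m, hm⟩, hηQ, ⟨w₀, hex₀⟩, hex⟩ := h
  have hη : (ShortComplex.mk η (cokernel.π η) (cokernel.condition η)).Exact :=
    ShortComplex.exact_of_g_is_cokernel _ (cokernelIsCokernel η)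
  refine ⟨fun | 0 => I₀ | j + 1 => J j, fun | 0 => cokernel.π η ≫ ηQ | j + 1 => dJ j, η,
    fun | 0 => hI₀ | j + 1 => hJ j,
    ⟨m + 1, fun | j + 1, hj => hm j (by omega)⟩,
    inferInstance,
    ⟨_, exact_mk_comp_mono _ _ _ hη⟩,
    fun | 0 => ⟨_, exact_mk_epi_comp _ _ _ hex₀⟩ | j + 1 => hex j⟩

end Resolutions

section Coinduction

variable {C : Type u} [Category.{v} C] {k : Type w} [CommRing k]

def autRep (V : C ⥤ ModuleCat.{max v t} k) (n : C) : Rep.{max v t} k (Aut n) :=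
  Rep.of (X := V.obj n)
    { toFun g := (V.map g.hom).hom
      map_one' := by change (V.map (𝟙 n)).hom = 1; rw [V.map_id]; rfl
      map_mul' g h := by change (V.map (h.hom ≫ g.hom)).hom = _; rw [V.map_comp]; rfl }

def autRepMap {X Y : C ⥤ ModuleCat.{max v t} k} (f : X ⟶ Y) (n : C) :
    autRep X n ⟶ autRep Y n :=
  Rep.ofHom ⟨(f.app n).hom, fun g => by
    ext x
    exact ConcreteCategory.congr_hom (f.naturality g.hom) x⟩

instance mono_autRepMap {X Y : C ⥤ ModuleCat.{max v t} k} (f : X ⟶ Y) [Mono f] (n : C) :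
    Mono (autRepMap f n) :=
  (Rep.mono_iff_injective _).2 ((ModuleCat.mono_iff_injective (f.app n)).1 inferInstance)

variable {n : C}

def coindSubmodule (W : Rep.{max v t} k (Aut n)) (m : C) : Submodule k ((m ⟶ n) → W) where
  carrier := {φ | ∀ (g : m ⟶ n) (h : Aut n), φ (g ≫ h.hom) = W.ρ h (φ g)}
  add_mem' ha hb g h := by simp [ha g h, hb g h]
  zero_mem' g h := by simp
  smul_mem' c φ hφ g h := by simp [hφ g h]

def coind (W : Rep.{max v t} k (Aut n)) : C ⥤ ModuleCat.{max v t} k where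
  obj m := ModuleCat.of k (coindSubmodule W m)
  map f := ModuleCat.ofHom <| LinearMap.codRestrict _
    ((LinearMap.funLeft k W (f ≫ ·)).comp (coindSubmodule W _).subtype)
    fun φ g h => by
      change φ.1 (f ≫ g ≫ h.hom) = W.ρ h (φ.1 (f ≫ g))
      simpa using φ.2 (f ≫ g) h
  map_id m := by ext φ g; simp
  map_comp f f' := by
    ext φ g
    change φ.1 ((f ≫ f') ≫ g) = φ.1 (f ≫ f' ≫ g)
    rw [Category.assoc]

@[simp] lemma coind_map_apply (W : Rep.{max v t} k (Aut n)) {m m' : C} (f : m ⟶ m')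
    (φ : (coind W).obj m) (g : m' ⟶ n) : ((coind W).map f φ).1 g = φ.1 (f ≫ g) := rfl

variable {X Y : C ⥤ ModuleCat.{max v t} k} {W : Rep.{max v t} k (Aut n)}

lemma coind_app_apply (α : X ⟶ coind W) {m : C} (x : X.obj m) (g : m ⟶ n) :
    (α.app m x).1 g = (α.app n (X.map g x)).1 (𝟙 n) := by
  simp only [NatTrans.naturality_apply, coind_map_apply, Category.comp_id]

def coindHomEquiv : (autRep Y n ⟶ W) ≃ (Y ⟶ coind W) where
  toFun f :=
    { app m := ModuleCat.ofHom <| LinearMap.codRestrict _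
        (LinearMap.pi fun g : m ⟶ n => f.hom.toLinearMap ∘ₗ (Y.map g).hom)
        fun y g h => by
          change f.hom (Y.map (g ≫ h.hom) y) = W.ρ h (f.hom (Y.map g y))
          rw [Y.map_comp, ConcreteCategory.comp_apply]
          exact Rep.hom_comm_apply f h (Y.map g y)
      naturality m m' u := by
        ext y
        refine Subtype.ext (funext fun g => ?_)
        change f.hom (Y.map g (Y.map u y)) = f.hom (Y.map (u ≫ g) y)
        simp }
  invFun α := Rep.ofHom
    ⟨LinearMap.proj (𝟙 n) ∘ₗ (coindSubmodule W n).subtype ∘ₗ (α.app n).hom, fun h => by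
      ext x
      change (α.app n (Y.map h.hom x)).1 (𝟙 n) = W.ρ h ((α.app n x).1 (𝟙 n))
      simpa [← coind_app_apply] using (α.app n x).2 (𝟙 n) h⟩
  left_inv f := by
    ext y
    change f.hom (Y.map (𝟙 n) y) = f.hom y
    simp
  right_inv α := by
    ext m x
    refine Subtype.ext (funext fun g => ?_)
    exact (coind_app_apply α x g).symm

lemma coindHomEquiv_naturality_left (ι : X ⟶ Y) (f : autRep Y n ⟶ W) :
    coindHomEquiv (autRepMap ι n ≫ f) = ι ≫ coindHomEquiv f := by
  ext m x
  refine Subtype.ext (funext fun g => ?_)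
  change f.hom (ι.app n (X.map g x)) = f.hom (Y.map g (ι.app m x))
  rw [NatTrans.naturality_apply]

theorem injective_coind (W : Rep.{max v t} k (Aut n)) [Injective W] : Injective (coind W) where
  factors α ι _ :=
    ⟨coindHomEquiv (Injective.factorThru (coindHomEquiv.symm α) (autRepMap ι n)), by
      rw [← coindHomEquiv_naturality_left, Injective.comp_factorThru, Equiv.apply_symm_apply]⟩

instance (W : Rep.{max v t} k (Aut n)) {m : C} [IsEmpty (m ⟶ n)] :
    Subsingleton ((coind W).obj m) :=
  ⟨fun _ _ => Subtype.ext (funext isEmptyElim)⟩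

instance [IsNoetherianRing k] (W : Rep.{max v t} k (Aut n)) [Module.Finite k W] {m : C}
    [Finite (m ⟶ n)] : Module.Finite k ((coind W).obj m) :=
  inferInstanceAs (Module.Finite k (coindSubmodule W m))

def toCoind (V : C ⥤ ModuleCat.{max v t} k) (n : C) : V ⟶ coind (autRep V n) :=
  coindHomEquiv (𝟙 _)

lemma toCoind_app_self_injective (V : C ⥤ ModuleCat.{max v t} k) :
    Function.Injective ((toCoind V n).app n) := fun x y h => by
  have h' : V.map (𝟙 n) x = V.map (𝟙 n) y := congrArg (fun φ => φ.1 (𝟙 n)) h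
  simpa using h'

lemma toCoind_app_self_surjective (V : C ⥤ ModuleCat.{max v t} k)
    (hn : ∀ f : n ⟶ n, IsIso f) :
    Function.Surjective ((toCoind V n).app n) := fun φ =>
  ⟨φ.1 (𝟙 n), Subtype.ext <| funext fun g => by
    have := hn g
    have h : φ.1 (𝟙 n ≫ g) = V.map g (φ.1 (𝟙 n)) := φ.2 (𝟙 n) (asIso g)
    rw [Category.id_comp] at h
    exact h.symm⟩

end Coinduction

section Products

variable {C : Type u} [Category.{v} C] {k : Type w} [CommRing k] {ι : Type}
  (F : ι → C ⥤ ModuleCat.{t} k) {m : C}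

lemma pi_obj_ext {x y : (∏ᶜ F).obj m} (h : ∀ i, (Pi.π F i).app m x = (Pi.π F i).app m y) :
    x = y :=
  Concrete.isLimit_ext _ (isLimitOfPreserves ((evaluation C _).obj m) (limit.isLimit _)) x y
    fun ⟨i⟩ => h i

lemma isZero_pi_obj (h : ∀ i, IsZero ((F i).obj m)) : IsZero ((∏ᶜ F).obj m) := by
  rw [ModuleCat.isZero_iff_subsingleton]
  exact ⟨fun x y => pi_obj_ext F fun i =>
    (ModuleCat.subsingleton_of_isZero (h i)).elim _ _⟩

instance [Finite ι] [IsNoetherianRing k] [∀ i, Module.Finite k ((F i).obj m)] :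
    Module.Finite k ((∏ᶜ F).obj m) :=
  Module.Finite.of_injective (LinearMap.pi fun i => ((Pi.π F i).app m).hom)
    fun _ _ h => pi_obj_ext F fun i => congrFun h i

lemma pi_π_app_lift_app {X : C ⥤ ModuleCat.{t} k} (f : ∀ i, X ⟶ F i) (x : X.obj m) (i : ι) :
    (Pi.π F i).app m ((Pi.lift f).app m x) = (f i).app m x := by
  rw [← ConcreteCategory.comp_apply, ← NatTrans.comp_app, Pi.lift_π]

end Products

lemma isZero_cokernel_obj_of_epi_app {C : Type u} [Category.{v} C] {A : Type*} [Category A]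
    [Abelian A] {X Y : C ⥤ A} (η : X ⟶ Y) {m : C} [Epi (η.app m)] :
    IsZero ((cokernel η).obj m) :=
  (isZero_cokernel_of_epi (η.app m)).of_iso (PreservesCokernel.iso ((evaluation C A).obj m) η)

section Maschke

variable {C : Type u} [Category.{u} C] {k : Type u} [Field k] [CharZero k]

theorem injective_coind_of_charZero {n : C} [Finite (n ⟶ n)] (W : Rep.{max u t} k (Aut n)) :
    Injective (coind W) :=
  have : Finite (Aut n) := Finite.of_injective (fun e : Aut n => e.hom) fun _ _ h => Iso.ext h
  have : NeZero (Nat.card (Aut n) : k) := ⟨Nat.cast_ne_zero.2 Nat.card_pos.ne'⟩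
  injective_coind W

end Maschke

section Standing

variable [Category.{0} ℕ] {k : Type} [Field k]

lemma eiFinDim_coind {V : ℕ ⥤ ModuleCat k} (hV : ∀ m, Module.Finite k (V.obj m)) {n : ℕ}
    (hFin : ∀ m, Finite (m ⟶ n)) (hEmpty : ∀ m, n < m → IsEmpty (m ⟶ n)) :
    EIFinDim k (coind (autRep V n)) := by
  have : Module.Finite k (autRep V n) := hV n
  refine ⟨fun m => ?_, n, fun m hm => ?_⟩
  · have := hFin m
    infer_instance
  · have := hEmpty m hm
    exact ModuleCat.isZero_of_subsingleton _

variable [CharZero k]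

theorem exists_mono_injective_epi_app (hC : EIStanding) {V : ℕ ⥤ ModuleCat k}
    (hV : ∀ m, Module.Finite k (V.obj m)) {N : ℕ} (hVN : ∀ m, N < m → IsZero (V.obj m)) :
    ∃ (I : ℕ ⥤ ModuleCat k) (η : V ⟶ I), Mono η ∧ EIFinDim k I ∧ Injective I ∧
      ∀ m, N ≤ m → Epi (η.app m) := by
  obtain ⟨hEI, hEmpty, -, hFin, -⟩ := hC
  let F (i : Fin (N + 1)) := coind (autRep V i)
  have hF (i : Fin (N + 1)) : EIFinDim k (F i) :=
    eiFinDim_coind hV (fun m => hFin m i) fun _ hm => hEmpty hm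
  have (i : Fin (N + 1)) : Injective (F i) :=
    have := hFin i i
    injective_coind_of_charZero _
  have hI (m : ℕ) (hm : N < m) : IsZero ((∏ᶜ F).obj m) :=
    isZero_pi_obj F fun i =>
      have := hEmpty (i.is_le.trans_lt hm)
      ModuleCat.isZero_of_subsingleton _
  refine ⟨∏ᶜ F, Pi.lift fun i => toCoind V i, ?_, ⟨fun m => ?_, N, hI⟩, inferInstance,
    fun m hm => ?_⟩
  · refine (NatTrans.mono_iff_mono_app _).2 fun m => ?_
    rcases le_or_gt m N with hm | hm
    · rw [ModuleCat.mono_iff_injective]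
      intro x y hxy
      apply toCoind_app_self_injective (n := m) V
      simpa only [pi_π_app_lift_app] using congrArg ((Pi.π F ⟨m, by omega⟩).app m) hxy
    · exact (hVN m hm).mono _
  · have := fun i => (hF i).1 m
    infer_instance
  · rcases hm.eq_or_lt with rfl | hm
    · rw [ModuleCat.epi_iff_surjective]
      intro y
      obtain ⟨v, hv⟩ := toCoind_app_self_surjective V (hEI N) ((Pi.π F (Fin.last N)).app N y)
      refine ⟨v, pi_obj_ext F fun i => ?_⟩
      rcases i.is_le.eq_or_lt with hi | hi
      · obtain rfl : i = Fin.last N := Fin.ext hi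
        rw [pi_π_app_lift_app]
        exact hv
      · have := hEmpty hi
        exact Subsingleton.elim _ _
    · exact (hI m hm).epi _

theorem hasFiniteResolution_of_isZero_obj (hC : EIStanding) (N : ℕ) {V : ℕ ⥤ ModuleCat k}
    (hV : ∀ m, Module.Finite k (V.obj m)) (hVN : ∀ m, N ≤ m → IsZero (V.obj m)) :
    HasFiniteResolution (fun I => EIFinDim k I ∧ Injective I) V := by
  induction N generalizing V with
  | zero =>
    have hV0 : IsZero V := Functor.isZero V fun m => hVN m m.zero_le
    exact .of_isZero hV0 ⟨⟨hV, 0, fun m _ => hVN m m.zero_le⟩, hV0.injective⟩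
  | succ N ih =>
    obtain ⟨I, η, hη, hIfd, hIinj, hηepi⟩ := exists_mono_injective_epi_app hC hV hVN
    refine .of_cokernel η ⟨hIfd, hIinj⟩ (ih (fun m => ?_) fun m hm => ?_)
    · have := hIfd.1 m
      exact Module.Finite.of_surjective ((cokernel.π η).app m).hom
        ((ModuleCat.epi_iff_surjective _).1 inferInstance)
    · have := hηepi m hm
      exact isZero_cokernel_obj_of_epi_app η

end Standing

end EI

/-- **Lemma.** Let `k` be a field of characteristic 0 and `C` an EI category with
object set `ℕ` satisfying the standing conditions. Every finite-dimensional
`C`-module `V` admits a finite injective resolution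
`0 → V → I^0 → I^1 → ⋯ → I^m → 0` with finite-dimensional injective terms. -/
theorem EI.findim_injective_resolution [Category.{0} ℕ] (k : Type) [Field k]
    [CharZero k] (hC : EIStanding)
    (V : ℕ ⥤ ModuleCat k) (hfd : EIFinDim k V) :
    ∃ (I : ℕ → (ℕ ⥤ ModuleCat k)) (d : ∀ i : ℕ, I i ⟶ I (i + 1)) (η : V ⟶ I 0),
      (∀ i, EIFinDim k (I i) ∧ Injective (I i)) ∧
      (∃ m : ℕ, ∀ i, m < i → IsZero (I i)) ∧
      Mono η ∧
      (∃ w0 : η ≫ d 0 = 0, (ShortComplex.mk η (d 0) w0).Exact) ∧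
      (∀ i : ℕ, ∃ w : d i ≫ d (i + 1) = 0, (ShortComplex.mk (d i) (d (i + 1)) w).Exact) := by
  obtain ⟨hV, N, hVN⟩ := hfd
  exact EI.hasFiniteResolution_of_isZero_obj hC (N + 1) hV hVN
end

section
/- Let k be a field of characteristic 0 and let C be an EI category with object set ℕ satisfying the standing conditions. Assume that C satisfies the transitivity condition and that 0 is an initial object of C. Then for every n ∈ ℕ, the C_n-module kC_n e_0 (sending m ∈ {0,…,n} to the free k-module on C(0,m)) is an injective object in the abelian category of C_n-modules. -/
open CategoryTheory CategoryTheory.Limits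

attribute [local instance] CategoryTheory.Abelian.hasFiniteBiproducts

/-! Since `0` is initial in `C_n`, the module `kC_n e_0` is the constant module `k`. Every object
of `C_n` maps to `n`, and the transitivity condition, propagated along the factorisations
`m → l → n`, makes the finite group `Aut(n)` act transitively on each `C(m, n)`; hence a morphism
`Y ⟶ k` is the same as an `Aut(n)`-invariant functional on `Y(n)`. Injectivity of `k` thus
reduces to extending invariant functionals along injective equivariant maps: extend arbitrarily,
then average over `Aut(n)`, which is possible because `|Aut(n)|` is invertible in `k`. -/

namespace Representation

variable {k G X Y : Type*} [Field k] [Group G] [Fintype G]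
  [AddCommGroup X] [Module k X] [AddCommGroup Y] [Module k Y]

theorem exists_invariant_extend (ρX : Representation k G X) (ρY : Representation k G Y)
    (hG : (Fintype.card G : k) ≠ 0) (β : X →ₗ[k] Y) (hβ : Function.Injective β)
    (hβρ : ∀ g, β ∘ₗ ρX g = ρY g ∘ₗ β) (f : X →ₗ[k] k) (hf : ∀ g, f ∘ₗ ρX g = f) :
    ∃ Φ : Y →ₗ[k] k, Φ ∘ₗ β = f ∧ ∀ g, Φ ∘ₗ ρY g = Φ := by
  obtain ⟨r, hr⟩ := β.exists_leftInverse_of_injective (LinearMap.ker_eq_bot.mpr hβ)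
  have hψ : ∀ g x, f (r (ρY g (β x))) = f x := fun g x => by
    rw [← LinearMap.comp_apply (ρY g), ← hβρ g, LinearMap.comp_apply, ← LinearMap.comp_apply r,
      hr, LinearMap.id_apply, ← LinearMap.comp_apply f, hf]
  refine ⟨(Fintype.card G : k)⁻¹ • ∑ g, f ∘ₗ r ∘ₗ ρY g, ?_, fun h => ?_⟩
  · ext x
    simp [hψ, hG]
  · ext y
    simp only [LinearMap.comp_apply, LinearMap.smul_apply, LinearMap.sum_apply,
      ← Module.End.mul_apply, ← map_mul]
    congr 1
    exact Fintype.sum_equiv (Equiv.mulRight h) _ _ fun _ => rfl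

end Representation

namespace CategoryTheory

universe u v

variable {D : Type u} [Category.{v} D] {k : Type v} [Field k]

@[simps]
def Functor.autRepresentation (Y : D ⥤ ModuleCat k) (t : D) :
    Representation k (Aut t) (Y.obj t) where
  toFun g := (Y.map g.hom).hom
  map_one' := by rw [show (1 : Aut t).hom = 𝟙 t from rfl, Y.map_id]; rfl
  map_mul' g h := by rw [show (g * h).hom = h.hom ≫ g.hom from rfl, Y.map_comp]; rfl

abbrev constModule (D : Type u) [Category.{v} D] (k : Type v) [Field k] : D ⥤ ModuleCat k :=
  (Functor.const D).obj (ModuleCat.of k k)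

noncomputable def Limits.IsInitial.coyonedaFreeIsoConst {z : D} (hz : IsInitial z) :
    coyoneda.obj (Opposite.op z) ⋙ ModuleCat.free k ≅ constModule D k :=
  have (m : D) : Subsingleton (z ⟶ m) := ⟨hz.hom_ext⟩
  NatIso.ofComponents (fun m => (Finsupp.uniqueLinearEquiv k k (hz.to m)).toModuleIso)
    fun {m m'} u => by
      ext (v : (z ⟶ m) →₀ k)
      change Finsupp.mapDomain (· ≫ u) v (hz.to m') = v (hz.to m)
      rw [show hz.to m' = hz.to m ≫ u from hz.hom_ext _ _,
        Finsupp.mapDomain_apply (Function.injective_of_subsingleton _)]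

variable {t : D} (hto : ∀ m, Nonempty (m ⟶ t))
  (htrans : ∀ ⦃m : D⦄ (f g : m ⟶ t), ∃ h : Aut t, f ≫ h.hom = g)
  {Y : D ⥤ ModuleCat k} {Φ : Y.obj t →ₗ[k] k} (hΦ : ∀ g : Aut t, Φ ∘ₗ (Y.map g.hom).hom = Φ)

include htrans hΦ in
theorem apply_map_eq_of_invariant {m : D} (f g : m ⟶ t) (y : Y.obj m) :
    Φ (Y.map f y) = Φ (Y.map g y) := by
  obtain ⟨h, rfl⟩ := htrans f g
  simpa using (LinearMap.congr_fun (hΦ h) (Y.map f y)).symm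

noncomputable def liftOfInvariant : Y ⟶ constModule D k where
  app m := ModuleCat.ofHom (Φ ∘ₗ (Y.map (hto m).some).hom)
  naturality m m' u := by
    ext y
    simpa [Y.map_comp] using apply_map_eq_of_invariant htrans hΦ (u ≫ (hto m').some) (hto m).some y

theorem liftOfInvariant_app_apply {m : D} (f : m ⟶ t) (y : Y.obj m) :
    (liftOfInvariant hto htrans hΦ).app m y = Φ (Y.map f y) :=
  apply_map_eq_of_invariant htrans hΦ _ f y

include hto htrans in
theorem injective_constModule [Fintype (Aut t)] (hcard : (Fintype.card (Aut t) : k) ≠ 0) :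
    Injective (constModule D k) := by
  refine ⟨fun {X Y} α β _ => ?_⟩
  have hβ : Function.Injective (β.app t) :=
    (ModuleCat.mono_iff_injective _).mp ((NatTrans.mono_iff_mono_app β).mp ‹_› t)
  obtain ⟨Φ, hΦβ, hΦ⟩ := (X.autRepresentation t).exists_invariant_extend (Y.autRepresentation t)
    hcard (β.app t).hom hβ (fun g => by ext x; simp)
    (α.app t).hom (fun g => by ext x; simp)
  refine ⟨liftOfInvariant hto htrans hΦ, ?_⟩
  ext m x
  obtain ⟨s⟩ := hto m
  change (liftOfInvariant hto htrans hΦ).app m (β.app m x) = α.app m x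
  rw [liftOfInvariant_app_apply hto htrans hΦ s]
  calc Φ (Y.map s (β.app m x)) = Φ (β.app t (X.map s x)) := by rw [NatTrans.naturality_apply]
    _ = α.app t (X.map s x) := LinearMap.congr_fun hΦβ _
    _ = α.app m x := by simp

end CategoryTheory

namespace EI

variable [Category.{0} ℕ]

theorem exists_comp_eq_of_transitive (hC : EIStanding) (htr : EITransitive) {m N : ℕ}
    (f g : m ⟶ N) : ∃ h : N ⟶ N, f ≫ h = g := by
  obtain ⟨hiso, hempty, -, -, hfact⟩ := hC
  induction N generalizing m with
  | zero =>
    obtain rfl : m = 0 := Nat.eq_zero_of_not_pos fun hm => (hempty hm).false f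
    exact ⟨inv f ≫ g, by simp⟩
  | succ N ih =>
    rcases (Nat.le_of_not_lt fun hm => (hempty hm).false f).lt_or_eq with hlt | rfl
    · obtain ⟨f₁, f₂, rfl⟩ := hfact (Nat.lt_succ_iff.mp hlt) N.le_succ f
      obtain ⟨g₁, g₂, rfl⟩ := hfact (Nat.lt_succ_iff.mp hlt) N.le_succ g
      obtain ⟨u, rfl⟩ := ih f₁ g₁
      obtain ⟨h, hh⟩ := htr N f₂ (u ≫ g₂)
      exact ⟨h, by rw [Category.assoc, hh, Category.assoc]⟩
    · exact ⟨inv f ≫ g, by simp⟩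

theorem sub_exists_aut_comp_eq (hC : EIStanding) (htr : EITransitive) {n : ℕ} ⦃m : EIsub n⦄
    (f g : m ⟶ ⟨n, le_rfl⟩) : ∃ h : Aut (⟨n, le_rfl⟩ : EIsub n), f ≫ h.hom = g := by
  obtain ⟨h, hh⟩ := exists_comp_eq_of_transitive hC htr f.hom g.hom
  have := hC.1 n h
  exact ⟨(ObjectProperty.fullyFaithfulι _).preimageIso (asIso h), ObjectProperty.hom_ext _ hh⟩

end EI

/-- **Lemma.** Let `k` be a field of characteristic 0 and `C` an EI category with
object set `ℕ` satisfying the standing conditions, the transitivity condition, and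
having `0` as an initial object. Then for every `n`, the `C_n`-module `kC_n e_0`
is an injective object of the abelian category of `C_n`-modules. -/
theorem EI.sub_free0_injective [Category.{0} ℕ] (k : Type) [Field k] [CharZero k]
    (hC : EIStanding) (htr : EITransitive) (h0 : EIInitialZero) (n : ℕ) :
    Injective ((coyoneda.obj (Opposite.op (⟨0, Nat.zero_le n⟩ : EIsub n)) ⋙
      ModuleCat.free k : EIsub n ⥤ ModuleCat k)) := by
  have htrans := EI.sub_exists_aut_comp_eq hC htr (n := n)
  obtain ⟨-, -, hne, hfin, -⟩ := hC
  let t : EIsub n := ⟨n, le_rfl⟩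
  have hz : IsInitial (⟨0, Nat.zero_le n⟩ : EIsub n) :=
    IsInitial.ofUniqueHom (fun m => ObjectProperty.homMk (h0 m.obj).1.some)
      fun m _ => ObjectProperty.hom_ext _ ((h0 m.obj).2.elim _ _)
  have := hfin n n
  have : Finite (Aut t) := Finite.of_injective (fun g : Aut t => g.hom.hom)
    fun _ _ h => Aut.ext (ObjectProperty.hom_ext _ h)
  have : Fintype (Aut t) := Fintype.ofFinite _
  exact Injective.of_iso hz.coyonedaFreeIsoConst.symm <|
    injective_constModule (fun m => ⟨ObjectProperty.homMk (hne m.2).some⟩) htrans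
      (Nat.cast_ne_zero.mpr Fintype.card_ne_zero)
end

section
/- Let k be a field of characteristic 0 and let C be an EI category with object set ℕ satisfying the standing conditions. Assume that C is locally Noetherian over k, that C satisfies the transitivity condition, and that 0 is an initial object of C. Then the C-module kC e_0 is an injective object in the abelian category of C-modules. -/
/-!
Since `0` is initial, `kC e₀` is the constant functor `k`, so a map `X ⟶ kC e₀` is a linear form
on `colim X`; as `k` is injective over itself, it suffices that `colim` preserves monomorphisms.
For this, average over `C(M,M)`: by transitivity, `avg_M ∘ Y(p)` does not depend on `p : n ⟶ M`,
so transporting everything to a level `M` and averaging kills any given relation of the colimit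
once `M` is large, while in characteristic `0` every element of `⨁ₙ Y(n)` is congruent modulo
relations to its averaged transport to any large level `M`.
-/

open CategoryTheory CategoryTheory.Limits

attribute [local instance] CategoryTheory.Abelian.hasFiniteBiproducts

namespace EI

open Filter

variable [Category.{0} ℕ] {k : Type} [Field k]

section Averaging

variable [∀ n : ℕ, Fintype (n ⟶ n)] (Y : ℕ ⥤ ModuleCat k)

noncomputable def avg (n : ℕ) : Y.obj n →ₗ[k] Y.obj n :=
  (Fintype.card (n ⟶ n) : k)⁻¹ • ∑ g : n ⟶ n, (Y.map g).hom

theorem avg_apply {n : ℕ} (x : Y.obj n) :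
    avg Y n x = (Fintype.card (n ⟶ n) : k)⁻¹ • ∑ g : n ⟶ n, Y.map g x := by
  rw [avg, LinearMap.smul_apply, LinearMap.sum_apply]

variable {Y}

theorem avg_map_of_isIso {n : ℕ} (u : n ⟶ n) [IsIso u] (x : Y.obj n) :
    avg Y n (Y.map u x) = avg Y n x := by
  rw [avg_apply, avg_apply]
  congr 1
  simp_rw [← ModuleCat.comp_apply, ← Y.map_comp]
  exact Equiv.sum_comp ⟨(u ≫ ·), (inv u ≫ ·), fun g => by simp, fun g => by simp⟩
    (fun g => Y.map g x)

theorem avg_map_eq_avg_map (hiso : ∀ (n : ℕ) (f : n ⟶ n), IsIso f)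
    (hsur : ∀ ⦃m l n : ℕ⦄, m ≤ l → l ≤ n → ∀ h : m ⟶ n, ∃ (g : m ⟶ l) (f : l ⟶ n), g ≫ f = h)
    (htr : EITransitive) {n N : ℕ} (hnN : n ≤ N) (p q : n ⟶ N) (x : Y.obj n) :
    avg Y N (Y.map p x) = avg Y N (Y.map q x) := by
  induction hnN using Nat.decreasingInduction with
  | self =>
    have := hiso N p
    have := hiso N q
    rw [avg_map_of_isIso, avg_map_of_isIso]
  | of_succ n hn ih =>
    -- factor `p` and `q` through `n + 1`; by transitivity the first factors differ by an
    -- automorphism of `n + 1`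
    obtain ⟨a, b, rfl⟩ := hsur n.le_succ hn p
    obtain ⟨a', b', rfl⟩ := hsur n.le_succ hn q
    obtain ⟨u, rfl⟩ := htr n a a'
    simpa only [Functor.map_comp, ModuleCat.comp_apply] using ih b (u ≫ b') (Y.map a x)

theorem app_avg {X : ℕ ⥤ ModuleCat k} (f : X ⟶ Y) {n : ℕ} (x : X.obj n) :
    f.app n (avg X n x) = avg Y n (f.app n x) := by
  simp only [avg_apply, map_smul, map_sum, ← ModuleCat.comp_apply, f.naturality]

end Averaging

section Colimit

abbrev Total (Y : ℕ ⥤ ModuleCat k) := DirectSum ℕ fun n => Y.obj n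

/-- `Total Y ⧸ colimRel Y` is the colimit of `Y` in `k`-modules. -/
noncomputable def colimRel (Y : ℕ ⥤ ModuleCat k) : Submodule k (Total Y) :=
  Submodule.span k {y | ∃ (n m : ℕ) (h : n ⟶ m) (w : Y.obj n),
    y = DirectSum.lof k ℕ _ m (Y.map h w) - DirectSum.lof k ℕ _ n w}

noncomputable def totalMap {X Y : ℕ ⥤ ModuleCat k} (f : X ⟶ Y) : Total X →ₗ[k] Total Y :=
  DirectSum.lmap fun n => (f.app n).hom

variable {X Y : ℕ ⥤ ModuleCat k}

theorem lof_map_sub_lof_mem_colimRel {n m : ℕ} (h : n ⟶ m) (w : Y.obj n) :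
    DirectSum.lof k ℕ _ m (Y.map h w) - DirectSum.lof k ℕ _ n w ∈ colimRel Y :=
  Submodule.subset_span ⟨n, m, h, w, rfl⟩

theorem colimRel_le_comap_totalMap (f : X ⟶ Y) :
    colimRel X ≤ (colimRel Y).comap (totalMap f) := by
  refine Submodule.span_le.2 ?_
  rintro _ ⟨n, m, h, w, rfl⟩
  have hnat : f.app m (X.map h w) = Y.map h (f.app n w) := by
    rw [← ModuleCat.comp_apply, f.naturality, ModuleCat.comp_apply]
  rw [SetLike.mem_coe, Submodule.mem_comap, map_sub, totalMap, DirectSum.lmap_lof,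
    DirectSum.lmap_lof]
  exact hnat ▸ lof_map_sub_lof_mem_colimRel h (f.app n w)

noncomputable def colimMap (f : X ⟶ Y) : (Total X ⧸ colimRel X) →ₗ[k] Total Y ⧸ colimRel Y :=
  (colimRel X).mapQ (colimRel Y) (totalMap f) (colimRel_le_comap_totalMap f)

theorem colimRel_le_ker_toModule {M : Type} [AddCommGroup M] [Module k M]
    (φ : ∀ n, Y.obj n →ₗ[k] M)
    (hφ : ∀ ⦃n m : ℕ⦄ (h : n ⟶ m) (w : Y.obj n), φ m (Y.map h w) = φ n w) :
    colimRel Y ≤ LinearMap.ker (DirectSum.toModule k ℕ M φ) := by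
  refine Submodule.span_le.2 ?_
  rintro _ ⟨n, m, h, w, rfl⟩
  rw [SetLike.mem_coe, LinearMap.mem_ker, map_sub, sub_eq_zero, DirectSum.toModule_lof,
    DirectSum.toModule_lof, hφ]

noncomputable def colimDesc {M : Type} [AddCommGroup M] [Module k M] (φ : ∀ n, Y.obj n →ₗ[k] M)
    (hφ : ∀ ⦃n m : ℕ⦄ (h : n ⟶ m) (w : Y.obj n), φ m (Y.map h w) = φ n w) :
    (Total Y ⧸ colimRel Y) →ₗ[k] M :=
  (colimRel Y).liftQ (DirectSum.toModule k ℕ M φ) (colimRel_le_ker_toModule φ hφ)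

theorem colimDesc_mk_lof {M : Type} [AddCommGroup M] [Module k M] (φ : ∀ n, Y.obj n →ₗ[k] M)
    (hφ : ∀ ⦃n m : ℕ⦄ (h : n ⟶ m) (w : Y.obj n), φ m (Y.map h w) = φ n w) {n : ℕ} (w : Y.obj n) :
    colimDesc φ hφ (Submodule.Quotient.mk (DirectSum.lof k ℕ _ n w)) = φ n w := by
  rw [colimDesc, Submodule.liftQ_apply, DirectSum.toModule_lof]

end Colimit

section LevelAverage

variable [∀ n : ℕ, Fintype (n ⟶ n)] {X Y : ℕ ⥤ ModuleCat k}

open scoped Classical in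
noncomputable def levelAvg (Y : ℕ ⥤ ModuleCat k) (M : ℕ) : Total Y →ₗ[k] Y.obj M :=
  DirectSum.toModule k ℕ _ fun n =>
    if h : Nonempty (n ⟶ M) then avg Y M ∘ₗ (Y.map h.some).hom else 0

theorem levelAvg_lof_of_nonempty {n M : ℕ} (h : Nonempty (n ⟶ M)) (w : Y.obj n) :
    levelAvg Y M (DirectSum.lof k ℕ _ n w) = avg Y M (Y.map h.some w) := by
  rw [levelAvg, DirectSum.toModule_lof, dif_pos h]
  rfl

theorem levelAvg_lof_of_isEmpty {n M : ℕ} (h : IsEmpty (n ⟶ M)) (w : Y.obj n) :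
    levelAvg Y M (DirectSum.lof k ℕ _ n w) = 0 := by
  rw [levelAvg, DirectSum.toModule_lof, dif_neg (not_nonempty_iff.2 h)]
  rfl

theorem levelAvg_lof (hiso : ∀ (n : ℕ) (f : n ⟶ n), IsIso f)
    (hsur : ∀ ⦃m l n : ℕ⦄, m ≤ l → l ≤ n → ∀ h : m ⟶ n, ∃ (g : m ⟶ l) (f : l ⟶ n), g ≫ f = h)
    (htr : EITransitive) {n M : ℕ} (hnM : n ≤ M) (p : n ⟶ M) (w : Y.obj n) :
    levelAvg Y M (DirectSum.lof k ℕ _ n w) = avg Y M (Y.map p w) := by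
  rw [levelAvg_lof_of_nonempty ⟨p⟩]
  exact avg_map_eq_avg_map hiso hsur htr hnM _ _ w

theorem eventually_levelAvg_eq_zero (hiso : ∀ (n : ℕ) (f : n ⟶ n), IsIso f)
    (hne : ∀ ⦃m n : ℕ⦄, m ≤ n → Nonempty (m ⟶ n))
    (hsur : ∀ ⦃m l n : ℕ⦄, m ≤ l → l ≤ n → ∀ h : m ⟶ n, ∃ (g : m ⟶ l) (f : l ⟶ n), g ≫ f = h)
    (htr : EITransitive) {y : Total Y} (hy : y ∈ colimRel Y) :
    ∀ᶠ M in atTop, levelAvg Y M y = 0 := by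
  induction hy using Submodule.span_induction with
  | mem y hy =>
    obtain ⟨n, m, h, w, rfl⟩ := hy
    filter_upwards [eventually_ge_atTop (max n m)] with M hM
    obtain ⟨p⟩ := hne (le_of_max_le_right hM)
    rw [map_sub, levelAvg_lof hiso hsur htr (le_of_max_le_right hM) p,
      levelAvg_lof hiso hsur htr (le_of_max_le_left hM) (h ≫ p), Functor.map_comp,
      ModuleCat.comp_apply, sub_self]
  | zero => exact .of_forall fun M => map_zero _
  | add y z _ _ hy hz =>
    filter_upwards [hy, hz] with M hy hz
    rw [map_add, hy, hz, add_zero]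
  | smul c y _ hy =>
    filter_upwards [hy] with M hy
    rw [map_smul, hy, smul_zero]

theorem app_levelAvg (f : X ⟶ Y) (M : ℕ) (x : Total X) :
    f.app M (levelAvg X M x) = levelAvg Y M (totalMap f x) := by
  induction x using DirectSum.induction_on with
  | zero => simp only [map_zero]
  | of n w =>
    rw [← DirectSum.lof_eq_of k, totalMap, DirectSum.lmap_lof]
    rcases isEmpty_or_nonempty (n ⟶ M) with h | h
    · rw [levelAvg_lof_of_isEmpty h, levelAvg_lof_of_isEmpty h, map_zero]
    · rw [levelAvg_lof_of_nonempty h, levelAvg_lof_of_nonempty h, app_avg,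
        ← ModuleCat.comp_apply, f.naturality, ModuleCat.comp_apply]
  | add x y hx hy => simp only [map_add, hx, hy]

theorem lof_sub_lof_avg_mem_colimRel [CharZero k] {M : ℕ} (z : Y.obj M) :
    DirectSum.lof k ℕ _ M z - DirectSum.lof k ℕ _ M (avg Y M z) ∈ colimRel Y := by
  have : Nonempty (M ⟶ M) := ⟨𝟙 M⟩
  have hcard : (Fintype.card (M ⟶ M) : k) ≠ 0 := Nat.cast_ne_zero.2 Fintype.card_ne_zero
  have hsum : DirectSum.lof k ℕ _ M z - DirectSum.lof k ℕ _ M (avg Y M z) =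
      -((Fintype.card (M ⟶ M) : k)⁻¹ • ∑ g : M ⟶ M,
        (DirectSum.lof k ℕ (fun n => Y.obj n) M (Y.map g z) - DirectSum.lof k ℕ _ M z)) := by
    rw [avg_apply, map_smul, map_sum, Finset.sum_sub_distrib, Finset.sum_const, Finset.card_univ,
      smul_sub, ← Nat.cast_smul_eq_nsmul k, smul_smul, inv_mul_cancel₀ hcard, one_smul, neg_sub]
  rw [hsum]
  exact neg_mem (Submodule.smul_mem _ _
    (Submodule.sum_mem _ fun g _ => lof_map_sub_lof_mem_colimRel g z))

theorem eventually_sub_lof_levelAvg_mem_colimRel [CharZero k]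
    (hne : ∀ ⦃m n : ℕ⦄, m ≤ n → Nonempty (m ⟶ n)) (x : Total X) :
    ∀ᶠ M in atTop, x - DirectSum.lof k ℕ _ M (levelAvg X M x) ∈ colimRel X := by
  induction x using DirectSum.induction_on with
  | zero => exact .of_forall fun M => by rw [map_zero, map_zero, sub_zero]; exact zero_mem _
  | of n w =>
    rw [← DirectSum.lof_eq_of k]
    filter_upwards [eventually_ge_atTop n] with M hM
    rw [levelAvg_lof_of_nonempty (hne hM)]
    convert sub_mem (lof_sub_lof_avg_mem_colimRel (X.map (hne hM).some w))
      (lof_map_sub_lof_mem_colimRel (hne hM).some w) using 1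
    abel
  | add x y hx hy =>
    filter_upwards [hx, hy] with M hx hy
    convert add_mem hx hy using 1
    rw [map_add, map_add]
    abel

theorem colimMap_injective [CharZero k] (hiso : ∀ (n : ℕ) (f : n ⟶ n), IsIso f)
    (hne : ∀ ⦃m n : ℕ⦄, m ≤ n → Nonempty (m ⟶ n))
    (hsur : ∀ ⦃m l n : ℕ⦄, m ≤ l → l ≤ n → ∀ h : m ⟶ n, ∃ (g : m ⟶ l) (f : l ⟶ n), g ≫ f = h)
    (htr : EITransitive) {f : X ⟶ Y} (hf : ∀ n, Function.Injective (f.app n)) :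
    Function.Injective (colimMap f) := by
  refine (injective_iff_map_eq_zero _).2 fun q hq => ?_
  induction q using Submodule.Quotient.induction_on with | H x => ?_
  rw [colimMap, Submodule.mapQ_apply, Submodule.Quotient.mk_eq_zero] at hq
  obtain ⟨M, hM0, hMx⟩ := ((eventually_levelAvg_eq_zero hiso hne hsur htr hq).and
    (eventually_sub_lof_levelAvg_mem_colimRel hne x)).exists
  have hx0 : levelAvg X M x = 0 := hf M (by rw [app_levelAvg, hM0, map_zero])
  rw [hx0, map_zero, sub_zero] at hMx
  exact (Submodule.Quotient.mk_eq_zero _).2 hMx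

end LevelAverage

section Free0

variable (h0 : IsInitial (0 : ℕ)) {X Y : ℕ ⥤ ModuleCat k}

noncomputable def free0Equiv (n : ℕ) : (EIfree k 0).obj n ≃ₗ[k] k :=
  have : Subsingleton ((0 : ℕ) ⟶ n) := ⟨h0.hom_ext⟩
  Finsupp.uniqueLinearEquiv k k (h0.to n)

theorem map_free0Equiv_symm {n m : ℕ} (h : n ⟶ m) (c : k) :
    (EIfree k 0).map h ((free0Equiv h0 n).symm c) = (free0Equiv h0 m).symm c := by
  change Finsupp.mapDomain (· ≫ h) (Finsupp.single (h0.to n) c) = Finsupp.single (h0.to m) c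
  rw [Finsupp.mapDomain_single, h0.hom_ext (h0.to n ≫ h) (h0.to m)]

theorem free0Equiv_map {n m : ℕ} (h : n ⟶ m) (l : (EIfree k 0).obj n) :
    free0Equiv h0 m ((EIfree k 0).map h l) = free0Equiv h0 n l := by
  obtain ⟨c, rfl⟩ := (free0Equiv h0 n).symm.surjective l
  rw [map_free0Equiv_symm, LinearEquiv.apply_symm_apply, LinearEquiv.apply_symm_apply]

noncomputable def toFree0 (Ψ : (Total Y ⧸ colimRel Y) →ₗ[k] k) : Y ⟶ EIfree k 0 where
  app n := ModuleCat.ofHom ((free0Equiv h0 n).symm.toLinearMap ∘ₗ Ψ ∘ₗ (colimRel Y).mkQ ∘ₗ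
    DirectSum.lof k ℕ (fun n => Y.obj n) n)
  naturality n m h := by
    ext w
    change (free0Equiv h0 m).symm (Ψ (Submodule.Quotient.mk (DirectSum.lof k ℕ _ m (Y.map h w))))
      = (EIfree k 0).map h
          ((free0Equiv h0 n).symm (Ψ (Submodule.Quotient.mk (DirectSum.lof k ℕ _ n w))))
    rw [map_free0Equiv_symm, (Submodule.Quotient.eq _).2 (lof_map_sub_lof_mem_colimRel h w)]

theorem toFree0_app_apply (Ψ : (Total Y ⧸ colimRel Y) →ₗ[k] k) {n : ℕ} (w : Y.obj n) :
    (toFree0 h0 Ψ).app n w =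
      (free0Equiv h0 n).symm (Ψ (Submodule.Quotient.mk (DirectSum.lof k ℕ _ n w))) :=
  rfl

noncomputable def ofFree0 (g : X ⟶ EIfree k 0) : (Total X ⧸ colimRel X) →ₗ[k] k :=
  colimDesc (fun n => (free0Equiv h0 n).toLinearMap ∘ₗ (g.app n).hom) fun n m h w => by
    rw [LinearMap.comp_apply, LinearMap.comp_apply, LinearEquiv.coe_coe, LinearEquiv.coe_coe,
      ← free0Equiv_map h0 h, ← ModuleCat.comp_apply, g.naturality, ModuleCat.comp_apply]

theorem comp_toFree0 (f : X ⟶ Y) (Ψ : (Total Y ⧸ colimRel Y) →ₗ[k] k) :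
    f ≫ toFree0 h0 Ψ = toFree0 h0 (Ψ ∘ₗ colimMap f) := by
  ext n w : 4
  rw [NatTrans.comp_app, ModuleCat.comp_apply, toFree0_app_apply, toFree0_app_apply,
    LinearMap.comp_apply, colimMap, Submodule.mapQ_apply, totalMap, DirectSum.lmap_lof]

theorem toFree0_ofFree0 (g : X ⟶ EIfree k 0) : toFree0 h0 (ofFree0 h0 g) = g := by
  ext n w : 4
  rw [toFree0_app_apply, ofFree0, colimDesc_mk_lof, LinearMap.comp_apply, LinearEquiv.coe_coe,
    LinearEquiv.symm_apply_apply]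

end Free0

end EI

theorem EI.free0_injective_general [Category.{0} ℕ] (k : Type) [Field k] [CharZero k]
    (hC : EIStanding) (htr : EITransitive) (h0 : EIInitialZero) :
    Injective (EIfree k 0) := by
  obtain ⟨hiso, -, hne, hfin, hsur⟩ := hC
  let hinit : IsInitial (0 : ℕ) :=
    IsInitial.ofUniqueHom (fun n => (h0 n).1.some) fun n _ => (h0 n).2.elim _ _
  let : ∀ n : ℕ, Fintype (n ⟶ n) := fun n => @Fintype.ofFinite _ (hfin n n)
  refine ⟨fun {X Y} g f hf => ?_⟩
  have hinj (n : ℕ) : Function.Injective (f.app n) :=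
    (ModuleCat.mono_iff_injective _).1 ((NatTrans.mono_iff_mono_app f).1 hf n)
  obtain ⟨r, hr⟩ := LinearMap.exists_leftInverse_of_injective (colimMap f)
    (LinearMap.ker_eq_bot.2 (EI.colimMap_injective hiso hne hsur htr hinj))
  refine ⟨EI.toFree0 hinit (EI.ofFree0 hinit g ∘ₗ r), ?_⟩
  rw [EI.comp_toFree0, LinearMap.comp_assoc, hr, LinearMap.comp_id, EI.toFree0_ofFree0]

/-- **Corollary.** Let `k` be a field of characteristic 0 and `C` an EI category
with object set `ℕ` satisfying the standing conditions, locally Noetherian over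
`k`, satisfying the transitivity condition and having `0` as an initial object.
Then the `C`-module `kC e_0` is an injective object of the abelian category of
`C`-modules. -/
theorem EI.free0_injective [Category.{0} ℕ] (k : Type) [Field k] [CharZero k]
    (hC : EIStanding) (hN : EILocNoeth k) (htr : EITransitive) (h0 : EIInitialZero) :
    Injective (EIfree k 0) :=
  EI.free0_injective_general k hC htr h0
end

section
/- Let k be a field of characteristic p > 0 and let C = FI (the category of finite sets and injections). Then the C-module kC e_0 is NOT an injective object in the abelian category of C-modules. -/
open CategoryTheory CategoryTheory.Limits

/-- Objects of the category `FI`: natural numbers (bundled). -/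
structure FI where
  n : ℕ

/-- The category `FI`: a morphism `X ⟶ Y` is an injective map
`{1,…,X.n} → {1,…,Y.n}`, with composition of maps. -/
instance FI.category : Category FI where
  Hom X Y := Fin X.n ↪ Fin Y.n
  id X := Function.Embedding.refl _
  comp f g := f.trans g

/-- The free `FI`-module `kC e_0`, sending `m` to the free `k`-module on the
(one-element) hom-set `FI(0, m)`. -/
noncomputable def FI.free0 (k : Type) [Field k] : FI ⥤ ModuleCat k :=
  coyoneda.obj (Opposite.op ⟨0⟩) ⋙ ModuleCat.free k

/-!
Let `S_p` act on `FI(p, X)` by precomposition; its orbits are the `p`-element subsets of `X`.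
Symmetrization `{S} ↦ ∑_{im g = S} g` embeds the free module on `p`-subsets into
`k FI(p, -)`, while the augmentation sends every subset to the basis vector of `kC e_0`.
Since every endomorphism of `p` acts trivially on `kC e_0(p) = k`, naturality forces any
`h : k FI(p, -) → kC e_0` to take one value `v` on all of `FI(p, p)`, so the composite of `h`
with symmetrization sends `{1, …, p}` to `p! • v = 0`. Hence the augmentation does not extend
along symmetrization, and `kC e_0` is not injective.
-/

theorem Equiv.Perm.toEmbedding_trans_injective {α β : Type*} (g : α ↪ β) :
    Function.Injective fun σ : Equiv.Perm α => σ.toEmbedding.trans g := fun _ _ h =>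
  Equiv.ext fun x => g.injective (DFunLike.congr_fun h x)

namespace FI

instance (X : FI) : Subsingleton ((⟨0⟩ : FI) ⟶ X) :=
  ⟨fun _ _ => Function.Embedding.ext fun x => x.elim0⟩

/-- Embeddings `Fin p ↪ Fin m` up to permutations of `Fin p`, i.e. `p`-element subsets
of `Fin m`. -/
def permSetoid (p m : ℕ) : Setoid (Fin p ↪ Fin m) where
  r g g' := ∃ σ : Equiv.Perm (Fin p), σ.toEmbedding.trans g = g'
  iseqv :=
    { refl _ := ⟨1, rfl⟩
      symm := by
        rintro _ _ ⟨σ, rfl⟩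
        exact ⟨σ⁻¹, by ext; simp⟩
      trans := by
        rintro _ _ _ ⟨σ, rfl⟩ ⟨τ, rfl⟩
        exact ⟨τ.trans σ, rfl⟩ }

def subsets (p : ℕ) : FI ⥤ Type where
  obj X := Quotient (permSetoid p X.n)
  map f := ↾Quotient.map (fun g => g.trans f) (by rintro _ _ ⟨σ, rfl⟩; exact ⟨σ, rfl⟩)
  map_id _ := by
    ext q
    induction q using Quotient.inductionOn
    rfl
  map_comp _ _ := by
    ext q
    induction q using Quotient.inductionOn
    rfl

def subsets.mk {p : ℕ} {X : FI} (g : Fin p ↪ Fin X.n) : (subsets p).obj X := ⟦g⟧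

lemma subsets.mk_perm_trans {p : ℕ} {X : FI} (σ : Equiv.Perm (Fin p)) (g : Fin p ↪ Fin X.n) :
    subsets.mk (σ.toEmbedding.trans g) = subsets.mk g :=
  Quotient.sound ⟨σ⁻¹, by ext; simp⟩

section Symmetrize

variable (k : Type) [Ring k] (p : ℕ)

noncomputable def free : FI ⥤ ModuleCat k :=
  coyoneda.obj (Opposite.op ⟨p⟩) ⋙ ModuleCat.free k

noncomputable def freeSubsets : FI ⥤ ModuleCat k :=
  subsets p ⋙ ModuleCat.free k

-- Basis vectors typed in `(F ⋙ ModuleCat.free k).obj X`, not `(ModuleCat.free k).obj _`,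
-- so that rewriting does not get stuck on the composite functor.
noncomputable def free.mk {X : FI} (g : Fin p ↪ Fin X.n) : (free k p).obj X :=
  ModuleCat.freeMk g

noncomputable def freeSubsets.mk {X : FI} (g : Fin p ↪ Fin X.n) : (freeSubsets k p).obj X :=
  ModuleCat.freeMk (subsets.mk g)

noncomputable def symmetrizeApp (X : FI) : (freeSubsets k p).obj X ⟶ (free k p).obj X :=
  ModuleCat.freeDesc (↾Quotient.lift
    (fun g => ∑ σ : Equiv.Perm (Fin p), free.mk k p (σ.toEmbedding.trans g))
    (by
      rintro g _ ⟨σ, rfl⟩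
      exact (Equiv.sum_comp (Equiv.mulLeft σ) _).symm))

/-- Keeps only the coefficient of a chosen representative of each orbit. -/
noncomputable def retractApp (X : FI) : (free k p).obj X ⟶ (freeSubsets k p).obj X :=
  ModuleCat.freeDesc (↾fun g : Fin p ↪ Fin X.n =>
    if g = (subsets.mk g).out then freeSubsets.mk k p g else 0)

variable {k p}

lemma free_map_mk {X Y : FI} (f : X ⟶ Y) (g : Fin p ↪ Fin X.n) :
    (free k p).map f (free.mk k p g) = free.mk k p (g.trans f) :=
  ModuleCat.free_map_apply _ _

lemma freeSubsets_map_mk {X Y : FI} (f : X ⟶ Y) (g : Fin p ↪ Fin X.n) :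
    (freeSubsets k p).map f (freeSubsets.mk k p g) = freeSubsets.mk k p (g.trans f) :=
  ModuleCat.free_map_apply _ _

lemma freeSubsets.mk_perm_trans {X : FI} (σ : Equiv.Perm (Fin p)) (g : Fin p ↪ Fin X.n) :
    freeSubsets.mk k p (σ.toEmbedding.trans g) = freeSubsets.mk k p g :=
  congrArg ModuleCat.freeMk (subsets.mk_perm_trans σ g)

@[ext]
lemma freeSubsets_hom_ext {X : FI} {M : ModuleCat k} {φ ψ : (freeSubsets k p).obj X ⟶ M}
    (h : ∀ g : Fin p ↪ Fin X.n, φ (freeSubsets.mk k p g) = ψ (freeSubsets.mk k p g)) :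
    φ = ψ :=
  ModuleCat.free_hom_ext fun q => Quotient.inductionOn q h

lemma symmetrizeApp_mk (X : FI) (g : Fin p ↪ Fin X.n) :
    symmetrizeApp k p X (freeSubsets.mk k p g) =
      ∑ σ : Equiv.Perm (Fin p), free.mk k p (σ.toEmbedding.trans g) :=
  ModuleCat.freeDesc_apply _ _

lemma retractApp_mk (X : FI) (g : Fin p ↪ Fin X.n) :
    retractApp k p X (free.mk k p g) =
      if g = (subsets.mk g).out then freeSubsets.mk k p g else 0 :=
  ModuleCat.freeDesc_apply _ _

lemma retractApp_symmetrizeApp (X : FI) (x : (freeSubsets k p).obj X) :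
    retractApp k p X (symmetrizeApp k p X x) = x := by
  suffices symmetrizeApp k p X ≫ retractApp k p X = 𝟙 _ from congrArg (fun φ => φ x) this
  ext g
  obtain ⟨τ, hτ⟩ : ∃ τ : Equiv.Perm (Fin p), τ.toEmbedding.trans g = (subsets.mk g).out :=
    (permSetoid p X.n).symm (Quotient.mk_out g)
  have hterm (σ : Equiv.Perm (Fin p)) :
      retractApp k p X (free.mk k p (σ.toEmbedding.trans g)) =
        if σ = τ then freeSubsets.mk k p g else 0 := by
    rw [retractApp_mk, subsets.mk_perm_trans, ← hτ, freeSubsets.mk_perm_trans]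
    exact if_congr (Equiv.Perm.toEmbedding_trans_injective g).eq_iff rfl rfl
  rw [ModuleCat.comp_apply, symmetrizeApp_mk, map_sum, ModuleCat.id_apply]
  simp only [hterm, Finset.sum_ite_eq', Finset.mem_univ, if_true]

variable (k p)

/-- The symmetrization `{S} ↦ ∑_{im g = S} g`. -/
@[simps]
noncomputable def symmetrize : freeSubsets k p ⟶ free k p where
  app := symmetrizeApp k p
  naturality X Y f := by
    ext g
    rw [ModuleCat.comp_apply, ModuleCat.comp_apply, freeSubsets_map_mk, symmetrizeApp_mk,
      symmetrizeApp_mk, map_sum]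
    simp only [free_map_mk, Function.Embedding.trans_assoc]

instance mono_symmetrize : Mono (symmetrize k p) :=
  have (X : FI) : Mono ((symmetrize k p).app X) := (ModuleCat.mono_iff_injective _).mpr
    (Function.LeftInverse.injective (retractApp_symmetrizeApp X))
  NatTrans.mono_of_mono_app _

end Symmetrize

section Augmentation

variable {k : Type} [Field k] {p : ℕ}

noncomputable def free0.unit (X : FI) : (free0 k).obj X :=
  ModuleCat.freeMk (⟨Fin.elim0, fun x => x.elim0⟩ : (⟨0⟩ : FI) ⟶ X)

lemma free0.unit_ne_zero (X : FI) : free0.unit (k := k) X ≠ 0 :=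
  Finsupp.single_ne_zero.mpr one_ne_zero

lemma free0_map_unit {X Y : FI} (f : X ⟶ Y) : (free0 k).map f (free0.unit X) = free0.unit Y :=
  (ModuleCat.free_map_apply _ _).trans
    (congrArg ModuleCat.freeMk (Subsingleton.elim (α := (⟨0⟩ : FI) ⟶ Y) _ _))

lemma free0_map_endo {X : FI} (f : X ⟶ X) : (free0 k).map f = 𝟙 _ := by
  have : (coyoneda.obj (Opposite.op (⟨0⟩ : FI))).map f = 𝟙 _ :=
    ConcreteCategory.hom_ext _ _ fun _ => Subsingleton.elim (α := (⟨0⟩ : FI) ⟶ X) _ _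
  exact (congrArg (ModuleCat.free k).map this).trans ((ModuleCat.free k).map_id _)

variable (k p) in
noncomputable def augmentationApp (X : FI) : (freeSubsets k p).obj X ⟶ (free0 k).obj X :=
  ModuleCat.freeDesc (↾fun _ => free0.unit X)

lemma augmentationApp_mk {X : FI} (g : Fin p ↪ Fin X.n) :
    augmentationApp k p X (freeSubsets.mk k p g) = free0.unit X :=
  ModuleCat.freeDesc_apply _ _

variable (k p) in
@[simps]
noncomputable def augmentation : freeSubsets k p ⟶ free0 k where
  app := augmentationApp k p
  naturality X Y f := by
    ext g
    rw [ModuleCat.comp_apply, ModuleCat.comp_apply, freeSubsets_map_mk, augmentationApp_mk,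
      augmentationApp_mk, free0_map_unit]

lemma app_free_mk_eq_app_free_mk_refl (h : free k p ⟶ free0 k) (g : Fin p ↪ Fin p) :
    h.app ⟨p⟩ (free.mk k p g) = h.app ⟨p⟩ (free.mk k p (Function.Embedding.refl _)) := by
  have := congrArg (fun φ => φ (free.mk k p (Function.Embedding.refl _))) (h.naturality g)
  rwa [ModuleCat.comp_apply, ModuleCat.comp_apply, free_map_mk, Function.Embedding.refl_trans,
    free0_map_endo, ModuleCat.id_apply] at this

lemma symmetrize_comp_app_mk_refl (h : free k p ⟶ free0 k) :
    (symmetrize k p ≫ h).app ⟨p⟩ (freeSubsets.mk k p (Function.Embedding.refl _)) =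
      p.factorial • h.app ⟨p⟩ (free.mk k p (Function.Embedding.refl _)) := by
  rw [NatTrans.comp_app, ModuleCat.comp_apply, symmetrize_app, symmetrizeApp_mk, map_sum]
  simp only [app_free_mk_eq_app_free_mk_refl h, Finset.sum_const, Finset.card_univ,
    Fintype.card_perm, Fintype.card_fin]

theorem symmetrize_comp_ne_augmentation (hfact : (p.factorial : k) = 0)
    (h : free k p ⟶ free0 k) : symmetrize k p ≫ h ≠ augmentation k p := by
  intro hext
  have := congrArg (fun η => η.app ⟨p⟩ (freeSubsets.mk k p (Function.Embedding.refl _))) hext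
  rw [symmetrize_comp_app_mk_refl, augmentation_app, augmentationApp_mk,
    ← Nat.cast_smul_eq_nsmul k, hfact, zero_smul] at this
  exact free0.unit_ne_zero _ this.symm

end Augmentation

end FI

/-- **Proposition.** Let `k` be a field of characteristic `p > 0` and `C = FI`.
Then the `C`-module `kC e_0` is not an injective object of the abelian category of
`C`-modules. -/
theorem FI.free0_not_injective (k : Type) [Field k] (p : ℕ) [CharP k p] (hp : 0 < p) :
    ¬ Injective (FI.free0 k) := by
  intro _
  have hfact : (p.factorial : k) = 0 :=
    (CharP.cast_eq_zero_iff k p _).mpr (Nat.dvd_factorial hp le_rfl)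
  exact FI.symmetrize_comp_ne_augmentation hfact _
    (Injective.comp_factorThru (FI.augmentation k p) (FI.symmetrize k p))
end
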